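/- arXiv:1510.00998 — 9 statements merged into one kernel-verified Lean document; each statement's English description precedes it below -/
import Mathlib

section
/- Proposition (key-properties, assertion 2): let g₀, …, g_{n+1}, η₀, …, η_{n+1} be a key-form datum and fix m with 0 ≤ m ≤ n. Then the following are equivalent: (a) g_i is a polynomial for every 0 ≤ i ≤ m+1; (b) for each 1 ≤ i ≤ m, α_i·η_i lies in the sub-semigroup of ℤ consisting of all nonnegative-integer combinations of η₀, η₁, …, η_{i−1}. -/
noncomputable section

/-- `R₂ = ℂ[x,x⁻¹][y]`, realized as polynomials in `y` over Laurent polynomials in `x`. -/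
abbrev RR : Type := Polynomial (LaurentPolynomial ℂ)

/-- The element `x` of `ℂ[x,x⁻¹][y]` (the Laurent variable, a unit of the coefficient ring). -/
def xR : RR := Polynomial.C (LaurentPolynomial.T 1)

/-- An element of `ℂ[x,x⁻¹][y]` "is a polynomial" if all of its coefficients lie in
`ℂ[x] ⊆ ℂ[x,x⁻¹]`, i.e. it belongs to `ℂ[x,y]`. -/
def IsPolyForm (f : RR) : Prop :=
  ∀ i : ℕ, f.coeff i ∈ (Polynomial.toLaurent (R := ℂ)).range

/-- `α_j`: the least positive integer `α` such that `α·η j` lies in the subgroup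
`ℤη₀ + ⋯ + ℤη_{j-1}` of `ℤ`. -/
def alphaVal (η : ℕ → ℤ) (j : ℕ) : ℕ :=
  sInf {α : ℕ | 0 < α ∧ ∃ β : ℕ → ℤ, (α : ℤ) * η j = ∑ i ∈ Finset.range j, β i * η i}

/-- A key-form datum of length `n`: elements `g 0, …, g (n+1)` of `ℂ[x,x⁻¹][y]` and integers
`η 0, …, η (n+1)` satisfying the defining properties (P0)–(P2) of the key forms of a
semidegree `δ` on `ℂ[x,y]` with `δ(x) > 0` (with `η j = δ (g j)`). -/
structure KeyFormDatum (n : ℕ) where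
  g : ℕ → RR
  η : ℕ → ℤ
  hg0 : g 0 = xR
  hg1 : g 1 = Polynomial.X
  hmonic : ∀ j, 1 ≤ j → j ≤ n + 1 → (g j).Monic
  hη0 : 0 < η 0
  hrec : ∀ j, 1 ≤ j → j ≤ n →
    ∃ (β : ℕ → ℤ) (θ : ℂ), θ ≠ 0 ∧
      (∀ i, 1 ≤ i → i < j → 0 ≤ β i ∧ β i < (alphaVal η i : ℤ)) ∧
      η (j + 1) < (alphaVal η j : ℤ) * η j ∧
      (alphaVal η j : ℤ) * η j = ∑ i ∈ Finset.range j, β i * η i ∧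
      g (j + 1) = g j ^ (alphaVal η j) -
        Polynomial.C (LaurentPolynomial.C θ * LaurentPolynomial.T (β 0)) *
          ∏ i ∈ Finset.Ico 1 j, g i ^ (β i).toNat

/-! The coefficient `β 0` in the relation `g (j+1) = g j ^ α_j - θ x^(β 0) ∏ g i ^ (β i)` is the
exponent of `x` in the leading coefficient of the correction term, which is a monic product
times `θ x^(β 0)`; so, once `g 1, …, g j` are polynomials, `g (j+1)` is one iff `β 0 ≥ 0`.
If `α_j η_j` is a nonnegative combination `∑ c i η i`, reducing `c` digit by digit from the top
(replacing `α_i η_i` by a nonnegative combination of lower `η`s, which exists by induction)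
yields a representation with `0 ≤ c i < α_i` for `i ≥ 1` and `c 0 ≥ 0`; by the minimality of
the `α_i` such a reduced representation is unique, so it is `β` and `β 0 ≥ 0`. -/

open Polynomial LaurentPolynomial Finset

section Alpha

variable {η : ℕ → ℤ} {j : ℕ}

lemma natAbs_mem_setOf_alphaVal {k : ℤ} (hk : k ≠ 0) {β : ℕ → ℤ}
    (h : k * η j = ∑ i ∈ range j, β i * η i) :
    k.natAbs ∈ {α : ℕ | 0 < α ∧ ∃ β : ℕ → ℤ, (α : ℤ) * η j = ∑ i ∈ range j, β i * η i} := by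
  refine ⟨Int.natAbs_pos.2 hk, fun i => k.sign * β i, ?_⟩
  rw [← Int.sign_mul_self_eq_natAbs, mul_assoc, h, mul_sum]
  simp only [mul_assoc]

lemma alphaVal_le_natAbs {k : ℤ} (hk : k ≠ 0) {β : ℕ → ℤ}
    (h : k * η j = ∑ i ∈ range j, β i * η i) : alphaVal η j ≤ k.natAbs :=
  Nat.sInf_le (natAbs_mem_setOf_alphaVal hk h)

lemma alphaVal_pos (h0 : η 0 ≠ 0) (hj : 1 ≤ j) : 0 < alphaVal η j := by
  have h : η 0 * η j = ∑ i ∈ range j, (Pi.single 0 (η j) : ℕ → ℤ) i * η i := by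
    rw [sum_eq_single_of_mem 0 (mem_range.2 hj) fun i _ hi => by simp [hi]]
    simp [mul_comm]
  exact (Nat.sInf_mem ⟨_, natAbs_mem_setOf_alphaVal h0 h⟩).1

lemma eq_of_sub_mul_eq_sum_of_lt_alphaVal {b r : ℤ} (hb : 0 ≤ b ∧ b < alphaVal η j)
    (hr : 0 ≤ r ∧ r < alphaVal η j) {β : ℕ → ℤ}
    (h : (b - r) * η j = ∑ i ∈ range j, β i * η i) : b = r := by
  by_contra hne
  have := alphaVal_le_natAbs (sub_ne_zero.2 hne) h
  omega

lemma exists_sum_range_succ_eq_add_mod {a : ℕ} {γ : ℕ → ℕ}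
    (hγ : (a : ℤ) * η j = ∑ i ∈ range j, (γ i : ℤ) * η i) (c : ℕ → ℕ) :
    ∃ c' : ℕ → ℕ, ∑ i ∈ range (j + 1), (c i : ℤ) * η i =
      ∑ i ∈ range j, (c' i : ℤ) * η i + ((c j % a : ℕ) : ℤ) * η j := by
  refine ⟨fun i => c i + c j / a * γ i, ?_⟩
  have hcj : (c j : ℤ) * η j = (c j / a : ℕ) * (a * η j) + ((c j % a : ℕ) : ℤ) * η j := by
    conv_lhs => rw [← Nat.div_add_mod (c j) a]
    push_cast
    ring
  rw [sum_range_succ, hcj, hγ, mul_sum, ← add_assoc, ← sum_add_distrib]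
  push_cast
  congr 1
  exact sum_congr rfl fun i _ => by ring

theorem nonneg_of_sum_eq_sum_nat (h0 : η 0 ≠ 0) (hj : 1 ≤ j)
    (hsg : ∀ i, 1 ≤ i → i < j → ∃ γ : ℕ → ℕ,
      (alphaVal η i : ℤ) * η i = ∑ i' ∈ range i, (γ i' : ℤ) * η i')
    {b : ℕ → ℤ} (hb : ∀ i, 1 ≤ i → i < j → 0 ≤ b i ∧ b i < alphaVal η i)
    {c : ℕ → ℕ} (h : ∑ i ∈ range j, b i * η i = ∑ i ∈ range j, (c i : ℤ) * η i) :
    0 ≤ b 0 := by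
  induction j, hj using Nat.le_induction generalizing c with
  | base =>
    simp only [sum_range_one] at h
    have := mul_right_cancel₀ h0 h
    omega
  | succ j hj ih =>
    obtain ⟨γ, hγ⟩ := hsg j hj j.lt_succ_self
    obtain ⟨c', hc'⟩ := exists_sum_range_succ_eq_add_mod hγ c
    set r := c j % alphaVal η j
    have hr : r < alphaVal η j := Nat.mod_lt _ (alphaVal_pos h0 hj)
    rw [hc', sum_range_succ] at h
    have hbj : b j = r := by
      refine eq_of_sub_mul_eq_sum_of_lt_alphaVal (hb j hj j.lt_succ_self) (by omega)
        (β := fun i => c' i - b i) ?_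
      simp only [sub_mul, sum_sub_distrib]
      linarith
    exact ih (fun i h1 h2 => hsg i h1 (by omega)) (fun i h1 h2 => hb i h1 (by omega))
      (by rw [hbj] at h; linarith)

end Alpha

lemma Polynomial.mem_range_of_C_mul_mem_lifts_of_monic {R S : Type*} [Semiring R] [Semiring S]
    {φ : R →+* S} {a : S} {f : S[X]} (hf : f.Monic) (h : C a * f ∈ lifts φ) :
    a ∈ Set.range φ := by
  simpa [coeff_C_mul, hf.coeff_natDegree] using (lifts_iff_coeff_lifts _).1 h f.natDegree

lemma LaurentPolynomial.nonneg_of_C_mul_T_mem_range_toLaurent {R : Type*} [Semiring R]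
    {θ : R} (hθ : θ ≠ 0) {b : ℤ} (h : C θ * T b ∈ Set.range (toLaurent (R := R))) : 0 ≤ b := by
  obtain ⟨p, hp⟩ := h
  have hb : b ∈ (C θ * T b).coeff.support := by
    simp [support_coeff_C_mul_T_of_ne_zero hθ]
  rw [← hp, support_coeff_toLaurent, Finset.mem_map] at hb
  obtain ⟨k, -, rfl⟩ := hb
  exact Int.natCast_nonneg k

lemma LaurentPolynomial.C_mul_T_mem_range_toLaurent {R : Type*} [Semiring R] (θ : R) {b : ℤ}
    (hb : 0 ≤ b) : C θ * T b ∈ Set.range (toLaurent (R := R)) :=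
  ⟨Polynomial.C θ * X ^ b.toNat, by rw [toLaurent_C_mul_X_pow, Int.toNat_of_nonneg hb]⟩

lemma isPolyForm_iff_mem_liftsRing (f : RR) :
    IsPolyForm f ↔ f ∈ liftsRing (toLaurent (R := ℂ)) := by
  rw [← lifts_iff_liftsRing, lifts_iff_coeff_lifts]
  rfl

lemma nonneg_of_C_mul_mem_liftsRing_of_monic {θ : ℂ} (hθ : θ ≠ 0) {b : ℤ} {H : RR}
    (hH : H.Monic)
    (h : Polynomial.C (LaurentPolynomial.C θ * T b) * H ∈ liftsRing (toLaurent (R := ℂ))) :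
    0 ≤ b := by
  rw [← lifts_iff_liftsRing] at h
  exact nonneg_of_C_mul_T_mem_range_toLaurent hθ (mem_range_of_C_mul_mem_lifts_of_monic hH h)

lemma C_mul_mem_liftsRing (θ : ℂ) {b : ℤ} (hb : 0 ≤ b) {H : RR}
    (hH : H ∈ liftsRing (toLaurent (R := ℂ))) :
    Polynomial.C (LaurentPolynomial.C θ * T b) * H ∈ liftsRing (toLaurent (R := ℂ)) :=
  mul_mem ((lifts_iff_liftsRing _ _).1 (C'_mem_lifts (C_mul_T_mem_range_toLaurent θ hb))) hH

namespace KeyFormDatum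

variable {n : ℕ} (D : KeyFormDatum n)

lemma isPolyForm_g_zero : IsPolyForm (D.g 0) := by
  rw [D.hg0, xR, isPolyForm_iff_mem_liftsRing, ← lifts_iff_liftsRing]
  exact C'_mem_lifts ⟨X, toLaurent_X⟩

lemma isPolyForm_g_one : IsPolyForm (D.g 1) := by
  rw [D.hg1, isPolyForm_iff_mem_liftsRing, ← lifts_iff_liftsRing]
  exact X_mem_lifts _

lemma monic_prod_g_pow {j : ℕ} (hj : j ≤ n + 2) (e : ℕ → ℕ) :
    (∏ i ∈ Ico 1 j, D.g i ^ e i).Monic :=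
  monic_prod_of_monic _ _ fun i hi =>
    (D.hmonic i (mem_Ico.1 hi).1 (by have := (mem_Ico.1 hi).2; omega)).pow _

lemma exists_nat_sum_of_isPolyForm {j : ℕ} (hj1 : 1 ≤ j) (hjn : j ≤ n)
    (hgj : IsPolyForm (D.g j)) (hgj' : IsPolyForm (D.g (j + 1))) :
    ∃ β : ℕ → ℕ, (alphaVal D.η j : ℤ) * D.η j = ∑ i ∈ range j, (β i : ℤ) * D.η i := by
  obtain ⟨β, θ, hθ, hβ, -, hsum, hg⟩ := D.hrec j hj1 hjn
  rw [isPolyForm_iff_mem_liftsRing] at hgj hgj'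
  have hβ0 : 0 ≤ β 0 := by
    refine nonneg_of_C_mul_mem_liftsRing_of_monic hθ
      (D.monic_prod_g_pow (j := j) (by omega) fun i => (β i).toNat) ?_
    rw [← sub_sub_cancel (D.g j ^ alphaVal D.η j) (Polynomial.C _ * _), ← hg]
    exact sub_mem (pow_mem hgj _) hgj'
  refine ⟨fun i => (β i).toNat, hsum.trans (sum_congr rfl fun i hi => ?_)⟩
  rcases Nat.eq_zero_or_pos i with rfl | hi0
  · rw [Int.toNat_of_nonneg hβ0]
  · rw [Int.toNat_of_nonneg (hβ i hi0 (mem_range.1 hi)).1]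

lemma isPolyForm_g_succ {j : ℕ} (hj1 : 1 ≤ j) (hjn : j ≤ n)
    (hg : ∀ i ≤ j, IsPolyForm (D.g i))
    (hsg : ∀ i, 1 ≤ i → i ≤ j → ∃ γ : ℕ → ℕ,
      (alphaVal D.η i : ℤ) * D.η i = ∑ i' ∈ range i, (γ i' : ℤ) * D.η i') :
    IsPolyForm (D.g (j + 1)) := by
  obtain ⟨β, θ, -, hβ, -, hsum, hgj⟩ := D.hrec j hj1 hjn
  obtain ⟨c, hc⟩ := hsg j hj1 le_rfl
  have hβ0 : 0 ≤ β 0 :=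
    nonneg_of_sum_eq_sum_nat D.hη0.ne' hj1 (fun i h1 h2 => hsg i h1 h2.le) hβ (hsum.symm.trans hc)
  simp only [isPolyForm_iff_mem_liftsRing] at hg ⊢
  rw [hgj]
  exact sub_mem (pow_mem (hg j le_rfl) _) <| C_mul_mem_liftsRing θ hβ0 <|
    prod_mem fun i hi => pow_mem (hg i (mem_Ico.1 hi).2.le) _

end KeyFormDatum

/-- Proposition `key-properties`, assertion (2): for a key-form datum and `0 ≤ m ≤ n`,
the key forms `g 0, …, g (m+1)` are all polynomials if and only if for each `1 ≤ i ≤ m`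
the value `α_i · η_i` lies in the sub-semigroup of `ℤ` of nonnegative-integer combinations
of `η 0, …, η (i-1)`. -/
theorem keyforms_polynomial_iff_semigroup (n : ℕ) (D : KeyFormDatum n)
    (m : ℕ) (hm : m ≤ n) :
    (∀ i, i ≤ m + 1 → IsPolyForm (D.g i)) ↔
      (∀ i, 1 ≤ i → i ≤ m → ∃ β : ℕ → ℕ,
        (alphaVal D.η i : ℤ) * D.η i = ∑ i' ∈ Finset.range i, (β i' : ℤ) * D.η i') := by
  refine ⟨fun hg i hi1 him => D.exists_nat_sum_of_isPolyForm hi1 (him.trans hm)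
    (hg i (by omega)) (hg (i + 1) (by omega)), fun hsg i hi => ?_⟩
  induction i using Nat.strong_induction_on with
  | _ i ih =>
    match i with
    | 0 => exact D.isPolyForm_g_zero
    | 1 => exact D.isPolyForm_g_one
    | j + 2 =>
      exact D.isPolyForm_g_succ (by omega) (by omega) (fun i hij => ih i (by omega) (by omega))
        fun i h1 h2 => hsg i h1 (by omega)
end
end

section
/- Proposition (essential-value-prop, assertion 3, arithmetic form): with the essential key values ω₀, …, ω_{l+1} defined from the formal Puiseux pairs as in the context, for every 1 ≤ k ≤ l+1 the subgroup ℤω₀ + ℤω₁ + ⋯ + ℤω_{k−1} of ℤ equals (p_k·p_{k+1}⋯p_{l+1})·ℤ, and p_k is the least positive integer α such that α·ω_k ∈ ℤω₀ + ℤω₁ + ⋯ + ℤω_{k−1}. -/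
/-!
Write `P k = p k ⋯ p (l+1)`. Unwinding the recursion, `ω k = a k * P (k+1)` with
`a k ≡ q k [ZMOD p k]` for `k ≥ 1`, so `a k` is coprime to `p k`. Hence by induction
`ℤω₀ + ⋯ + ℤω_k = P k ℤ + a k P (k+1) ℤ = P (k+1) (p k ℤ + a k ℤ) = P (k+1) ℤ`, and
`α ω_k ∈ P k ℤ` iff `p k ∣ α a k` iff `p k ∣ α`.
-/

open Finset

theorem Finset.prod_Icc_eq_mul_prod_Icc_add_one {M : Type*} [CommMonoid M] (f : ℕ → M) {a b : ℕ}
    (h : a ≤ b) : ∏ i ∈ Icc a b, f i = f a * ∏ i ∈ Icc (a + 1) b, f i := by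
  rw [Icc_add_one_left_eq_Ioc, mul_prod_Ioc_eq_prod_Icc h]

theorem Ideal.mem_span_image_finset_iff_exists_sum {R ι : Type*} [CommSemiring R] (v : ι → R)
    (s : Finset ι) (x : R) : x ∈ Ideal.span (v '' s) ↔ ∃ c : ι → R, x = ∑ i ∈ s, c i * v i := by
  simp only [Ideal.span, Submodule.mem_span_image_finset_iff_exists_fun', smul_eq_mul, eq_comm]

theorem Ideal.span_singleton_mul_sup_span_singleton_mul {R : Type*} [CommRing R] {a b : R}
    (h : IsCoprime a b) (c : R) : span {a * c} ⊔ span {b * c} = span {c} := by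
  rw [← span_singleton_mul_span_singleton, ← span_singleton_mul_span_singleton, ← sup_mul,
    ((isCoprime_span_singleton_iff a b).2 h).sup_eq, top_mul]

theorem Int.isLeast_pos_dvd {n : ℤ} (hn : 0 < n) : IsLeast {α | 0 < α ∧ n ∣ α} n :=
  ⟨⟨hn, dvd_rfl⟩, fun _ ⟨hα, hd⟩ => Int.le_of_dvd hα hd⟩

namespace EssentialKeyValues

variable {l : ℕ} {p q ω : ℕ → ℤ}

theorem prod_Icc_dvd (hω0 : ω 0 = ∏ i ∈ Icc 1 (l + 1), p i)
    (hωk : ∀ k, k + 1 ≤ l + 1 →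
      ω (k + 1) = p k * ω k + (q (k + 1) - q k * p (k + 1)) * ∏ i ∈ Icc (k + 2) (l + 1), p i) :
    ∀ k ≤ l + 1, ∏ i ∈ Icc (k + 1) (l + 1), p i ∣ ω k
  | 0, _ => hω0 ▸ dvd_rfl
  | k + 1, hk => by
    have hsucc : ∏ i ∈ Icc (k + 2) (l + 1), p i ∣ ∏ i ∈ Icc (k + 1) (l + 1), p i :=
      prod_Icc_eq_mul_prod_Icc_add_one p hk ▸ dvd_mul_left _ _
    rw [hωk k hk]
    exact dvd_add ((hsucc.trans (prod_Icc_dvd hω0 hωk k (by omega))).mul_left _)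
      (dvd_mul_left _ _)

theorem exists_eq_mul_prod_Icc (hω0 : ω 0 = ∏ i ∈ Icc 1 (l + 1), p i)
    (hωk : ∀ k, k + 1 ≤ l + 1 →
      ω (k + 1) = p k * ω k + (q (k + 1) - q k * p (k + 1)) * ∏ i ∈ Icc (k + 2) (l + 1), p i)
    {k : ℕ} (hk : k + 1 ≤ l + 1) :
    ∃ b, ω (k + 1) = (q (k + 1) + p (k + 1) * b) * ∏ i ∈ Icc (k + 2) (l + 1), p i := by
  obtain ⟨c, hc⟩ := prod_Icc_dvd hω0 hωk k (by omega)
  have hrec := hωk k hk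
  rw [hc, prod_Icc_eq_mul_prod_Icc_add_one p hk] at hrec
  exact ⟨p k * c - q k, by rw [hrec]; ring⟩

theorem span_image_range_eq (hω0 : ω 0 = ∏ i ∈ Icc 1 (l + 1), p i)
    (hωk : ∀ k, k + 1 ≤ l + 1 →
      ω (k + 1) = p k * ω k + (q (k + 1) - q k * p (k + 1)) * ∏ i ∈ Icc (k + 2) (l + 1), p i)
    (hcop : ∀ k, 1 ≤ k → k ≤ l + 1 → IsCoprime (p k) (q k)) :
    ∀ k, k + 1 ≤ l + 1 →
      Ideal.span (ω '' range (k + 1)) = Ideal.span {∏ i ∈ Icc (k + 1) (l + 1), p i}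
  | 0, _ => by rw [range_one, coe_singleton, Set.image_singleton, hω0]
  | k + 1, hk => by
    have hk' : k + 1 ≤ l + 1 := by omega
    obtain ⟨b, hb⟩ := exists_eq_mul_prod_Icc hω0 hωk hk'
    rw [range_add_one, coe_insert, Set.image_insert_eq, Ideal.span_insert,
      span_image_range_eq hω0 hωk hcop k hk', prod_Icc_eq_mul_prod_Icc_add_one p hk', hb,
      sup_comm]
    exact Ideal.span_singleton_mul_sup_span_singleton_mul
      ((hcop (k + 1) (by omega) hk').add_mul_left_right b) _

end EssentialKeyValues

open EssentialKeyValues in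
theorem essential_key_values_span_general (l : ℕ) (p q : ℕ → ℤ)
    (hp : ∀ k, 1 ≤ k → k ≤ l → 2 ≤ p k)
    (hpl : 1 ≤ p (l + 1))
    (hcop : ∀ k, 1 ≤ k → k ≤ l + 1 → IsCoprime (p k) (q k))
    (ω : ℕ → ℤ)
    (hω0 : ω 0 = ∏ i ∈ Finset.Icc 1 (l + 1), p i)
    (hωk : ∀ k, 1 ≤ k → k ≤ l + 1 →
      ω k = p (k - 1) * ω (k - 1) +
        (q k - q (k - 1) * p k) * ∏ i ∈ Finset.Icc (k + 1) (l + 1), p i) :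
    ∀ k, 1 ≤ k → k ≤ l + 1 →
      (∀ m : ℤ,
        (∃ β : ℕ → ℤ, m = ∑ i ∈ Finset.range k, β i * ω i) ↔
        (∃ t : ℤ, m = t * ∏ i ∈ Finset.Icc k (l + 1), p i)) ∧
      IsLeast {α : ℤ | 0 < α ∧
        ∃ β : ℕ → ℤ, α * ω k = ∑ i ∈ Finset.range k, β i * ω i} (p k) := by
  have hrec : ∀ k, k + 1 ≤ l + 1 → ω (k + 1) =
      p k * ω k + (q (k + 1) - q k * p (k + 1)) * ∏ i ∈ Icc (k + 2) (l + 1), p i :=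
    fun k hk => by simpa only [Nat.add_sub_cancel] using hωk (k + 1) (by omega) hk
  have hpos : ∀ i, 1 ≤ i → i ≤ l + 1 → 0 < p i := fun i hi1 hi2 => by
    rcases hi2.lt_or_eq with hi | rfl
    exacts [by linarith [hp i hi1 (by omega)], by omega]
  intro k hk1 hk
  obtain ⟨k, rfl⟩ := Nat.exists_eq_add_of_le' hk1
  have hspan (x : ℤ) : (∃ β : ℕ → ℤ, x = ∑ i ∈ range (k + 1), β i * ω i) ↔
      ∏ i ∈ Icc (k + 1) (l + 1), p i ∣ x := by
    rw [← Ideal.mem_span_image_finset_iff_exists_sum, span_image_range_eq hω0 hrec hcop k hk,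
      Ideal.mem_span_singleton]
  refine ⟨fun m => by simp only [hspan, dvd_iff_exists_eq_mul_left], ?_⟩
  obtain ⟨b, hb⟩ := exists_eq_mul_prod_Icc hω0 hrec hk
  have htail : ∏ i ∈ Icc (k + 2) (l + 1), p i ≠ 0 :=
    (prod_pos fun i hi => (mem_Icc.1 hi).elim fun hi1 hi2 => hpos i (by omega) hi2).ne'
  have hcop' := (hcop (k + 1) (by omega) hk).add_mul_left_right b
  convert Int.isLeast_pos_dvd (hpos (k + 1) hk1 hk) using 3 with α
  rw [hspan, hb, prod_Icc_eq_mul_prod_Icc_add_one p hk, ← mul_assoc,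
    mul_dvd_mul_iff_right htail]
  exact and_congr_right fun _ => ⟨hcop'.dvd_of_dvd_mul_right, fun h => h.mul_right _⟩

/-- Proposition `essential-value-prop`, assertion (3) (arithmetic form): with the essential
key values `ω₀, …, ω_{l+1}` defined from the formal Puiseux pairs
`(q₁,p₁), …, (q_{l+1},p_{l+1})` by `ω₀ = p₁⋯p_{l+1}` and
`ω_k = p_{k-1}·ω_{k-1} + (q_k − q_{k-1}·p_k)·p_{k+1}⋯p_{l+1}`, for every `1 ≤ k ≤ l+1`
the subgroup `ℤω₀ + ⋯ + ℤω_{k-1}` of `ℤ` equals `(p_k·p_{k+1}⋯p_{l+1})·ℤ`, and `p_k` is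
the least positive integer `α` with `α·ω_k ∈ ℤω₀ + ⋯ + ℤω_{k-1}`. -/
theorem essential_key_values_span (l : ℕ) (p q : ℕ → ℤ)
    (hp0 : p 0 = 1) (hq0 : q 0 = 1)
    (hp : ∀ k, 1 ≤ k → k ≤ l → 2 ≤ p k)
    (hpl : 1 ≤ p (l + 1))
    (hcop : ∀ k, 1 ≤ k → k ≤ l + 1 → IsCoprime (p k) (q k))
    (ω : ℕ → ℤ)
    (hω0 : ω 0 = ∏ i ∈ Finset.Icc 1 (l + 1), p i)
    (hωk : ∀ k, 1 ≤ k → k ≤ l + 1 →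
      ω k = p (k - 1) * ω (k - 1) +
        (q k - q (k - 1) * p k) * ∏ i ∈ Finset.Icc (k + 1) (l + 1), p i) :
    ∀ k, 1 ≤ k → k ≤ l + 1 →
      (∀ m : ℤ,
        (∃ β : ℕ → ℤ, m = ∑ i ∈ Finset.range k, β i * ω i) ↔
        (∃ t : ℤ, m = t * ∏ i ∈ Finset.Icc k (l + 1), p i)) ∧
      IsLeast {α : ℤ | 0 < α ∧
        ∃ β : ℕ → ℤ, α * ω k = ∑ i ∈ Finset.range k, β i * ω i} (p k) :=
  essential_key_values_span_general l p q hp hpl hcop ω hω0 hωk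
end

section
/- Proposition (essential-value-prop, assertion 4): for every 0 ≤ j ≤ n, the value η_j lies in the subgroup of ℤ generated by the set {η_i : 0 ≤ i ≤ j and (i = 0 or α_i > 1)} (i.e. every key value lies in the group generated by the essential key values of smaller or equal index). -/
open Submodule

theorem mem_span_image_filter_range_succ {R M : Type*} [Semiring R] [AddCommMonoid M]
    [Module R M] (v : ℕ → M) (E : ℕ → Prop) [DecidablePred E] (n : ℕ)
    (h : ∀ j ≤ n, ¬E j → v j ∈ span R (v '' ↑(Finset.range j))) :
    ∀ j ≤ n, v j ∈ span R (v '' ↑((Finset.range (j + 1)).filter E)) := by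
  intro j
  induction j using Nat.strong_induction_on with
  | _ j ih =>
    intro hjn
    by_cases hE : E j
    · exact subset_span ⟨j, by simp [hE], rfl⟩
    · refine span_le.2 ?_ (h j hjn hE)
      rintro _ ⟨i, hi, rfl⟩
      have hij : i < j := by simpa using hi
      have hsub : (Finset.range (i + 1)).filter E ⊆ (Finset.range (j + 1)).filter E :=
        Finset.filter_subset_filter E (Finset.range_subset_range.2 (by omega))
      exact span_mono (Set.image_mono (Finset.coe_subset.2 hsub)) (ih i hij (by omega))

theorem key_value_in_essential_subgroup_general (n : ℕ) (η : ℕ → ℤ)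
    (A : ℕ → ℤ)
    (hA : ∀ j, 1 ≤ j → j ≤ n →
      IsLeast {α : ℤ | 0 < α ∧ ∃ β : ℕ → ℤ,
        α * η j = ∑ i ∈ Finset.range j, β i * η i} (A j)) :
    ∀ j, j ≤ n → ∃ β : ℕ → ℤ,
      η j = ∑ i ∈ (Finset.range (j + 1)).filter (fun i => i = 0 ∨ 1 < A i), β i * η i := by
  have h_inessential : ∀ j ≤ n, ¬(j = 0 ∨ 1 < A j) → η j ∈ span ℤ (η '' ↑(Finset.range j)) := by
    intro j hjn hj
    push Not at hj
    obtain ⟨⟨hpos, β, hβ⟩, -⟩ := hA j (Nat.one_le_iff_ne_zero.2 hj.1) hjn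
    rw [le_antisymm hj.2 hpos, one_mul] at hβ
    exact (mem_span_image_finset_iff_exists_fun' ℤ).2 ⟨β, hβ.symm⟩
  intro j hjn
  obtain ⟨β, hβ⟩ := (mem_span_image_finset_iff_exists_fun' ℤ).1
    (mem_span_image_filter_range_succ η _ n h_inessential j hjn)
  exact ⟨β, hβ.symm⟩

/-- Proposition `essential-value-prop`, assertion (4): let `η₀, …, η_{n+1}` be the values of
the key forms of a semidegree (so `η₀ > 0`, and for `1 ≤ j ≤ n` the number `A j` is the
least positive integer `α` with `α·η_j ∈ ℤη₀ + ⋯ + ℤη_{j-1}`, which automatically lies in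
that subgroup). Then for every `0 ≤ j ≤ n`, the value `η_j` lies in the subgroup of `ℤ`
generated by the essential key values of index `≤ j` (those `η_i` with `i = 0` or `A i > 1`). -/
theorem key_value_in_essential_subgroup (n : ℕ) (η : ℕ → ℤ) (hη0 : 0 < η 0)
    (A : ℕ → ℤ)
    (hA : ∀ j, 1 ≤ j → j ≤ n →
      IsLeast {α : ℤ | 0 < α ∧ ∃ β : ℕ → ℤ,
        α * η j = ∑ i ∈ Finset.range j, β i * η i} (A j)) :
    ∀ j, j ≤ n → ∃ β : ℕ → ℤ,
      η j = ∑ i ∈ (Finset.range (j + 1)).filter (fun i => i = 0 ∨ 1 < A i), β i * η i :=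
  key_value_in_essential_subgroup_general n η A hA
end

section
/- Lemma (canonical pre-images; Lemma F-Phi, assertions (1), (2) and (5)): in the expansion setup, for every f ∈ R[y] there exists a unique F ∈ R[y₁, …, y_k] such that π(F) = f and, for every 1 ≤ j ≤ k−1, the degree of F in the variable y_j is strictly less than p_j. -/
/-! The image of a monomial `y^a` under `π` is `∏ f_j ^ a_j`, monic of degree
`∑ a_j deg f_j = a_1 + a_2 p_1 + a_3 p_1 p_2 + ⋯`: the number with digits `a_1, …, a_k` in the
mixed radix `(p_1, …, p_{k-1})`, the top digit `a_k` being unbounded. So the canonical exponents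
(`a_j < p_j` for `j < k`) are in bijection with `ℕ` through the degree of their image. Existence
follows by repeatedly cancelling the leading term of `g` with the image of the canonical monomial
of that degree; uniqueness because in a nonzero canonical `F` the monomial of largest degree
contributes a leading coefficient that no other monomial can cancel. -/

open Finset

section MixedRadix

def mixedRadixValue (q : ℕ → ℕ) {m : ℕ} (a : Fin m → ℕ) : ℕ :=
  ∑ i, a i * ∏ t ∈ range i, q t

variable {q : ℕ → ℕ} {m : ℕ}

theorem mixedRadixValue_eq_init_add (a : Fin (m + 1) → ℕ) :
    mixedRadixValue q a =
      mixedRadixValue q (Fin.init a) + a (Fin.last m) * ∏ t ∈ range m, q t := by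
  simp only [mixedRadixValue, Fin.sum_univ_castSucc, Fin.val_castSucc, Fin.val_last, Fin.init]

theorem mixedRadixValue_snoc (a : Fin m → ℕ) (x : ℕ) :
    mixedRadixValue q (Fin.snoc a x : Fin (m + 1) → ℕ) =
      mixedRadixValue q a + x * ∏ t ∈ range m, q t := by
  rw [mixedRadixValue_eq_init_add, Fin.init_snoc, Fin.snoc_last]

theorem mixedRadixValue_lt_prod {a : Fin m → ℕ} (ha : ∀ i, a i < q i) :
    mixedRadixValue q a < ∏ t ∈ range m, q t := by
  induction m with
  | zero => simp [mixedRadixValue]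
  | succ m ih =>
    have hinit := ih (a := Fin.init a) fun i => ha i.castSucc
    have hlast : a (Fin.last m) + 1 ≤ q m := ha (Fin.last m)
    calc mixedRadixValue q a
        < (a (Fin.last m) + 1) * ∏ t ∈ range m, q t := by
          rw [mixedRadixValue_eq_init_add]; linarith
      _ ≤ q m * ∏ t ∈ range m, q t := Nat.mul_le_mul_right _ hlast
      _ = ∏ t ∈ range (m + 1), q t := by rw [prod_range_succ, mul_comm]

theorem eq_of_mixedRadixValue_eq_of_init {a b : Fin (m + 1) → ℕ}
    (ha : ∀ i : Fin m, a i.castSucc < q i) (hb : ∀ i : Fin m, b i.castSucc < q i)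
    (h : mixedRadixValue q a = mixedRadixValue q b)
    (hinit : mixedRadixValue q (Fin.init a) = mixedRadixValue q (Fin.init b) →
      Fin.init a = Fin.init b) :
    a = b := by
  have ha' := mixedRadixValue_lt_prod (a := Fin.init a) ha
  have hb' := mixedRadixValue_lt_prod (a := Fin.init b) hb
  have hW : 0 < ∏ t ∈ range m, q t := pos_of_gt ha'
  rw [mixedRadixValue_eq_init_add, mixedRadixValue_eq_init_add] at h
  have hlast : a (Fin.last m) = b (Fin.last m) := by
    simpa [Nat.add_mul_div_right _ _ hW, Nat.div_eq_of_lt ha', Nat.div_eq_of_lt hb'] using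
      congrArg (· / ∏ t ∈ range m, q t) h
  rw [← Fin.snoc_init_self a, ← Fin.snoc_init_self b, hinit (by rw [hlast] at h; omega), hlast]

theorem mixedRadixValue_injOn_of_lt :
    Set.InjOn (mixedRadixValue q) {a : Fin m → ℕ | ∀ i, a i < q i} := by
  induction m with
  | zero => exact fun a _ b _ _ => Subsingleton.elim a b
  | succ m ih =>
    exact fun a ha b hb h => eq_of_mixedRadixValue_eq_of_init (fun i => ha i.castSucc)
      (fun i => hb i.castSucc) h (ih (fun i => ha i.castSucc) (fun i => hb i.castSucc))

theorem mixedRadixValue_injOn :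
    Set.InjOn (mixedRadixValue q) {a : Fin (m + 1) → ℕ | ∀ i : Fin m, a i.castSucc < q i} :=
  fun _ ha _ hb h => eq_of_mixedRadixValue_eq_of_init ha hb h (mixedRadixValue_injOn_of_lt ha hb)

theorem exists_mixedRadixValue_eq_of_lt {n : ℕ} (hn : n < ∏ t ∈ range m, q t) :
    ∃ a : Fin m → ℕ, (∀ i, a i < q i) ∧ mixedRadixValue q a = n := by
  induction m generalizing n with
  | zero =>
    refine ⟨Fin.elim0, fun i => i.elim0, ?_⟩
    simp_all [mixedRadixValue]
  | succ m ih =>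
    rw [prod_range_succ] at hn
    have hW : 0 < ∏ t ∈ range m, q t := Nat.pos_of_mul_pos_right (pos_of_gt hn)
    obtain ⟨a, ha, hsum⟩ := ih (Nat.mod_lt n hW)
    refine ⟨Fin.snoc a (n / ∏ t ∈ range m, q t), Fin.forall_fin_succ'.mpr ⟨?_, ?_⟩, ?_⟩
    · simpa using ha
    · simpa using Nat.div_lt_of_lt_mul hn
    · rw [mixedRadixValue_snoc, hsum, Nat.mod_add_div']

theorem exists_mixedRadixValue_eq (hq : ∀ i : Fin m, 0 < q i) (n : ℕ) :
    ∃ a : Fin (m + 1) → ℕ, (∀ i : Fin m, a i.castSucc < q i) ∧ mixedRadixValue q a = n := by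
  have hW : 0 < ∏ t ∈ range m, q t := prod_pos fun t ht => hq ⟨t, mem_range.mp ht⟩
  obtain ⟨a, ha, hsum⟩ := exists_mixedRadixValue_eq_of_lt (Nat.mod_lt n hW)
  exact ⟨Fin.snoc a (n / ∏ t ∈ range m, q t), by simpa using ha,
    by rw [mixedRadixValue_snoc, hsum, Nat.mod_add_div']⟩

end MixedRadix

open scoped Polynomial

namespace MvPolynomial

variable {R σ : Type*}

section CommSemiring

variable [CommSemiring R] {f : σ → R[X]}

theorem aeval_monomial_eq_C_mul (a : σ →₀ ℕ) (c : R) :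
    aeval f (monomial a c) = Polynomial.C c * aeval f (monomial a 1) := by
  rw [aeval_monomial, aeval_monomial, map_one, one_mul, Polynomial.algebraMap_eq]

theorem monic_aeval_monomial_one (hf : ∀ i, (f i).Monic) (a : σ →₀ ℕ) :
    (aeval f (monomial a 1)).Monic := by
  rw [aeval_monomial, map_one, one_mul]
  exact Polynomial.monic_prod_of_monic _ _ fun i _ => (hf i).pow _

theorem natDegree_aeval_monomial_one (hf : ∀ i, (f i).Monic) (a : σ →₀ ℕ) :
    (aeval f (monomial a 1)).natDegree = Finsupp.weight (fun i => (f i).natDegree) a := by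
  rw [aeval_monomial, map_one, one_mul, Finsupp.prod,
    Polynomial.natDegree_prod_of_monic _ _ fun i _ => (hf i).pow _, Finsupp.weight_apply,
    Finsupp.sum]
  exact sum_congr rfl fun i _ => by rw [(hf i).natDegree_pow, smul_eq_mul]

theorem leadingCoeff_aeval_monomial (hf : ∀ i, (f i).Monic) (a : σ →₀ ℕ) (c : R) :
    (aeval f (monomial a c)).leadingCoeff = c := by
  rw [aeval_monomial_eq_C_mul, Polynomial.leadingCoeff_mul_monic (monic_aeval_monomial_one hf a),
    Polynomial.leadingCoeff_C]

theorem degree_aeval_monomial (hf : ∀ i, (f i).Monic) (a : σ →₀ ℕ) {c : R} (hc : c ≠ 0) :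
    (aeval f (monomial a c)).degree = Finsupp.weight (fun i => (f i).natDegree) a := by
  have : Nontrivial R := ⟨c, 0, hc⟩
  have hM := monic_aeval_monomial_one hf a
  rw [aeval_monomial_eq_C_mul, hM.degree_mul, Polynomial.degree_C hc, zero_add,
    Polynomial.degree_eq_natDegree hM.ne_zero, natDegree_aeval_monomial_one hf]

theorem coeff_aeval_weight_of_forall_weight_lt (hf : ∀ i, (f i).Monic)
    {F : MvPolynomial σ R} {a₀ : σ →₀ ℕ}
    (h : ∀ a ∈ F.support, a ≠ a₀ →
      Finsupp.weight (fun i => (f i).natDegree) a < Finsupp.weight (fun i => (f i).natDegree) a₀) :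
    (aeval f F).coeff (Finsupp.weight (fun i => (f i).natDegree) a₀) = F.coeff a₀ := by
  conv_lhs => rw [F.as_sum]
  rw [map_sum, Polynomial.finsetSum_coeff, sum_eq_single a₀]
  · rw [aeval_monomial_eq_C_mul, Polynomial.coeff_C_mul, ← natDegree_aeval_monomial_one hf,
      (monic_aeval_monomial_one hf a₀).coeff_natDegree, mul_one]
  · intro a ha hne
    rw [aeval_monomial_eq_C_mul, Polynomial.coeff_C_mul,
      Polynomial.coeff_eq_zero_of_natDegree_lt, mul_zero]
    rw [natDegree_aeval_monomial_one hf]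
    exact h a ha hne
  · intro ha
    rw [notMem_support_iff.mp ha, monomial_zero, map_zero, Polynomial.coeff_zero]

theorem forall_degreeOf_lt_iff_mem_restrictSupport {P : σ → Prop} {d : σ → ℕ}
    (hd : ∀ i, P i → 0 < d i) (F : MvPolynomial σ R) :
    (∀ i, P i → degreeOf i F < d i) ↔ F ∈ restrictSupport R {a | ∀ i, P i → a i < d i} := by
  simp only [mem_restrictSupport_iff, Set.subset_def, mem_coe, Set.mem_ofPred_eq]
  constructor
  · exact fun h a ha i hi => (degreeOf_lt_iff (hd i hi)).mp (h i hi) a ha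
  · exact fun h i hi => (degreeOf_lt_iff (hd i hi)).mpr fun a ha => h a ha i hi

end CommSemiring

section CommRing

variable [CommRing R] {f : σ → R[X]} {S : Set (σ →₀ ℕ)}

theorem eq_zero_of_mem_restrictSupport_of_aeval_eq_zero (hf : ∀ i, (f i).Monic)
    (hS : Set.InjOn (Finsupp.weight fun i => (f i).natDegree) S)
    {F : MvPolynomial σ R} (hFS : F ∈ restrictSupport R S) (hF : aeval f F = 0) : F = 0 := by
  by_contra hF0
  obtain ⟨a₀, ha₀, hmax⟩ := F.support.exists_max_image (Finsupp.weight fun i => (f i).natDegree)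
    (support_nonempty.mpr hF0)
  have hcoeff := coeff_aeval_weight_of_forall_weight_lt hf fun a ha hne =>
    (hmax a ha).lt_of_ne fun h => hne (hS (hFS ha) (hFS ha₀) h)
  rw [hF, Polynomial.coeff_zero] at hcoeff
  exact mem_support_iff.mp ha₀ hcoeff.symm

theorem exists_mem_restrictSupport_aeval_eq (hf : ∀ i, (f i).Monic)
    (hS : Set.SurjOn (Finsupp.weight fun i => (f i).natDegree) S Set.univ) (g : R[X]) :
    ∃ F ∈ restrictSupport R S, aeval f F = g := by
  induction hn : g.natDegree using Nat.strong_induction_on generalizing g with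
  | _ n ih =>
  rcases eq_or_ne g 0 with rfl | hg
  · exact ⟨0, zero_mem _, map_zero _⟩
  obtain ⟨a, haS, ha⟩ := hS (Set.mem_univ g.natDegree)
  set lead := aeval f (monomial a g.leadingCoeff)
  have hlt : (g - lead).degree < g.degree := Polynomial.degree_sub_lt_left
    (by rw [degree_aeval_monomial hf a (Polynomial.leadingCoeff_ne_zero.mpr hg), ha,
      Polynomial.degree_eq_natDegree hg])
    hg (leadingCoeff_aeval_monomial hf a _).symm
  obtain ⟨F, hFS, hF⟩ : ∃ F ∈ restrictSupport R S, aeval f F = g - lead := by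
    rcases eq_or_ne (g - lead) 0 with h | h
    · exact ⟨0, zero_mem _, by rw [h, map_zero]⟩
    · exact ih _ (hn ▸ Polynomial.natDegree_lt_natDegree h hlt) _ rfl
  refine ⟨F + monomial a g.leadingCoeff, add_mem hFS ?_, by rw [map_add, hF, sub_add_cancel]⟩
  exact (monomial_mem_restrictSupport (R := R)).mpr (.inl haS)

theorem existsUnique_aeval_eq_of_bijOn (hf : ∀ i, (f i).Monic)
    (hS : Set.BijOn (Finsupp.weight fun i => (f i).natDegree) S Set.univ) (g : R[X]) :
    ∃! F, aeval f F = g ∧ F ∈ restrictSupport R S := by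
  obtain ⟨F, hFS, hF⟩ := exists_mem_restrictSupport_aeval_eq hf hS.surjOn g
  refine ⟨F, ⟨hF, hFS⟩, fun F' ⟨hF', hF'S⟩ => sub_eq_zero.mp ?_⟩
  exact eq_zero_of_mem_restrictSupport_of_aeval_eq_zero hf hS.injOn (sub_mem hF'S hFS)
    (by rw [map_sub, hF, hF', sub_self])

end CommRing

end MvPolynomial

theorem bijOn_weight_prod_range {k : ℕ} (hk : 1 ≤ k) {q : ℕ → ℕ}
    (hq : ∀ i : Fin k, i.1 + 1 ≤ k - 1 → 0 < q i) :
    Set.BijOn (Finsupp.weight fun i : Fin k => ∏ t ∈ range i, q t)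
      {a | ∀ i : Fin k, i.1 + 1 ≤ k - 1 → a i < q i} Set.univ := by
  obtain ⟨m, rfl⟩ : ∃ m, k = m + 1 := ⟨k - 1, by omega⟩
  have hS (a : Fin (m + 1) →₀ ℕ) :
      a ∈ {a | ∀ i : Fin (m + 1), i.1 + 1 ≤ m + 1 - 1 → a i < q i} ↔
        ⇑a ∈ {a : Fin (m + 1) → ℕ | ∀ i : Fin m, a i.castSucc < q i} := by
    simp [Fin.forall_fin_succ']
  have hw (a : Fin (m + 1) →₀ ℕ) :
      Finsupp.weight (fun i : Fin (m + 1) => ∏ t ∈ range i, q t) a = mixedRadixValue q ⇑a := by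
    simp [Finsupp.weight_apply, Finsupp.sum_fintype, mixedRadixValue]
  refine ⟨Set.mapsTo_univ _ _, fun a ha b hb h => ?_, fun n _ => ?_⟩
  · rw [hw, hw] at h
    exact DFunLike.coe_injective (mixedRadixValue_injOn ((hS a).mp ha) ((hS b).mp hb) h)
  · obtain ⟨a, ha, rfl⟩ := exists_mixedRadixValue_eq (fun i => hq i.castSucc (by simp)) n
    exact ⟨Finsupp.equivFunOnFinite.symm a, (hS _).mpr ha, hw _⟩

/-- Lemma `F-Phi`, assertions (1), (2) and (5) (canonical pre-images): in the expansion
setup — `R` a commutative ring, `p₀ = 1`, `p₁, …, p_{k-1}` positive integers,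
`f₁, …, f_k ∈ R[y]` monic with `deg f_j = p₀p₁⋯p_{j-1}`, and `π : R[y₁,…,y_k] → R[y]`
the `R`-algebra map sending `y_j ↦ f_j` — every `g ∈ R[y]` has a unique pre-image
`F ∈ R[y₁,…,y_k]` under `π` with `deg_{y_j} F < p_j` for all `1 ≤ j ≤ k-1`.
(Here `f` is indexed by `Fin k`, `f i` standing for `f_{i+1}`.) -/
theorem exists_unique_canonical_preimage {R : Type*} [CommRing R]
    (k : ℕ) (hk : 1 ≤ k)
    (p : ℕ → ℕ) (hp0 : p 0 = 1) (hp : ∀ i, 1 ≤ i → i ≤ k - 1 → 0 < p i)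
    (f : Fin k → Polynomial R)
    (hmonic : ∀ i, (f i).Monic)
    (hdeg : ∀ i : Fin k, (f i).natDegree = ∏ t ∈ Finset.range (i.1 + 1), p t)
    (g : Polynomial R) :
    ∃! F : MvPolynomial (Fin k) R,
      MvPolynomial.aeval f F = g ∧
      ∀ i : Fin k, i.1 + 1 ≤ k - 1 → MvPolynomial.degreeOf i F < p (i.1 + 1) := by
  have hpos : ∀ i : Fin k, i.1 + 1 ≤ k - 1 → 0 < p (i.1 + 1) :=
    fun i hi => hp _ (Nat.le_add_left 1 _) hi
  have hweight : (fun i => (f i).natDegree) = fun i : Fin k => ∏ t ∈ range i, p (t + 1) :=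
    funext fun i => by rw [hdeg, prod_range_succ', hp0, mul_one]
  have hbij := bijOn_weight_prod_range (q := fun t => p (t + 1)) hk hpos
  rw [← hweight] at hbij
  simp only [MvPolynomial.forall_degreeOf_lt_iff_mem_restrictSupport hpos]
  exact MvPolynomial.existsUnique_aeval_eq_of_bijOn hmonic hbij g
end

section
/- Lemma (F-Phi, assertions (3) and (4)): in the expansion setup, let d ≥ 1 and suppose f ∈ R[y] is monic of degree p₁p₂⋯p_{k−1}·d; let F be the unique element of R[y₁, …, y_k] with π(F) = f and deg_{y_j} F < p_j for all 1 ≤ j ≤ k−1. Then F, viewed as a polynomial in y_k with coefficients in R[y₁, …, y_{k−1}], is monic of degree d; and for every monomial y₁^{β₁}⋯y_k^{β_k} occurring with nonzero coefficient in F − y_k^d, one has Σ_{i=1}^{j} p₀p₁⋯p_{i−1}·β_i < p₁p₂⋯p_j for each 1 ≤ j ≤ k−1, and Σ_{i=1}^{k} p₀p₁⋯p_{i−1}·β_i < p₁p₂⋯p_{k−1}·d. -/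
/-!
Substituting `y_j ↦ f_j` sends a monomial `y^β` to the monic polynomial `∏ f_j ^ β_j` of degree
`Σ deg f_j · β_j`, the weight of `β`. Since `deg f_j = p₀⋯p_{j-1}` and the exponents of `F` in the
first `k - 1` variables are bounded by `p_j`, these exponents are the digits of the weight in the
mixed radix `(p₁, …, p_{k-1})`, the last digit being unbounded; so distinct monomials of `F` have
distinct weights and their images cannot cancel at the top. Hence the largest weight occurring in
`F` is `deg g` and is attained by a single monomial whose coefficient is the leading coefficient of
`g`. The monomial `y_k^d` is admissible and has weight `deg g`, so it is this monomial and has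
coefficient `1`; every other monomial has smaller weight, and the partial bounds are the usual
mixed-radix estimate `Σ_{i<j} p₀⋯p_{i-1}·β_i < p₁⋯p_j`.
-/

open Finset Polynomial

section MixedRadix

variable {p : ℕ → ℕ}

theorem prod_range_succ_eq_prod_Icc (hp0 : p 0 = 1) (j : ℕ) :
    ∏ t ∈ range (j + 1), p t = ∏ t ∈ Icc 1 j, p t := by
  rw [prod_range_succ', hp0, mul_one, range_eq_Ico, prod_Ico_add' p 0 j 1,
    Ico_add_one_right_eq_Icc, zero_add]

theorem sum_range_mul_prod_lt_prod (hp0 : p 0 = 1) {b : ℕ → ℕ} :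
    ∀ {j : ℕ}, (∀ i < j, b i < p (i + 1)) →
      ∑ i ∈ range j, (∏ t ∈ range (i + 1), p t) * b i < ∏ t ∈ range (j + 1), p t
  | 0, _ => by simp [hp0]
  | j + 1, hb => calc
      ∑ i ∈ range (j + 1), (∏ t ∈ range (i + 1), p t) * b i
        < (∏ t ∈ range (j + 1), p t) * (b j + 1) := by
          rw [sum_range_succ, Nat.mul_succ]
          have := sum_range_mul_prod_lt_prod (j := j) hp0 fun i hi => hb i (by omega)
          omega
      _ ≤ (∏ t ∈ range (j + 1), p t) * p (j + 1) := Nat.mul_le_mul_left _ (hb j j.lt_succ_self)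
      _ = ∏ t ∈ range (j + 1 + 1), p t := (prod_range_succ p (j + 1)).symm

theorem eq_of_sum_range_mul_prod_eq (hp0 : p 0 = 1) {b b' : ℕ → ℕ} :
    ∀ {n : ℕ}, (∀ i < n, b i < p (i + 1)) → (∀ i < n, b' i < p (i + 1)) →
      ∑ i ∈ range (n + 1), (∏ t ∈ range (i + 1), p t) * b i =
        ∑ i ∈ range (n + 1), (∏ t ∈ range (i + 1), p t) * b' i →
      ∀ i ≤ n, b i = b' i
  | 0, _, _, h, i, hi => by simpa [hp0, Nat.le_zero.1 hi] using h
  | n + 1, hb, hb', h, i, hi => by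
    rw [sum_range_succ _ (n + 1), sum_range_succ _ (n + 1)] at h
    have hlt := sum_range_mul_prod_lt_prod hp0 fun i hi => hb i (by omega)
    have hlt' := sum_range_mul_prod_lt_prod hp0 fun i hi => hb' i (by omega)
    -- the lower digits sum to the remainder and the top digit is the quotient
    obtain ⟨htop, hlow⟩ := (Nat.div_mod_unique (by omega)).2 ⟨h, hlt⟩
    obtain ⟨htop', hlow'⟩ := (Nat.div_mod_unique (by omega)).2 ⟨rfl, hlt'⟩
    rcases Nat.lt_or_ge i (n + 1) with hi' | hi'
    · exact eq_of_sum_range_mul_prod_eq hp0 (fun i hi => hb i (by omega))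
        (fun i hi => hb' i (by omega)) (hlow.symm.trans hlow') i (by omega)
    · rw [show i = n + 1 by omega, ← htop, htop']

theorem sum_fin_ite_lt_eq_sum_range {M : Type*} [AddCommMonoid M] {k j : ℕ} (hj : j ≤ k)
    (g : ℕ → M) : ∑ i : Fin k, (if i.1 < j then g i else 0) = ∑ i ∈ range j, g i := by
  rw [Fin.sum_univ_eq_sum_range (fun i => if i < j then g i else 0), ← sum_filter]
  congr 1
  ext i
  simp only [mem_filter, mem_range]
  omega

theorem sum_fin_ite_lt_mul_prod_lt (hp0 : p 0 = 1) {k j : ℕ} (hj : j ≤ k) {β : Fin k → ℕ}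
    (hβ : ∀ i : Fin k, i.1 < j → β i < p (i.1 + 1)) :
    ∑ i : Fin k, (if i.1 < j then (∏ t ∈ range (i.1 + 1), p t) * β i else 0) <
      ∏ t ∈ range (j + 1), p t := by
  obtain ⟨b, hb⟩ : ∃ b : ℕ → ℕ, ∀ i : Fin k, b i = β i :=
    ⟨fun i => if h : i < k then β ⟨i, h⟩ else 0, fun i => dif_pos i.isLt⟩
  simp only [← hb]
  rw [sum_fin_ite_lt_eq_sum_range hj fun i => (∏ t ∈ range (i + 1), p t) * b i]
  exact sum_range_mul_prod_lt_prod hp0 fun i hi => (hb ⟨i, by omega⟩).trans_lt (hβ _ hi)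

theorem injOn_sum_fin_mul_prod (hp0 : p 0 = 1) (n : ℕ) :
    Set.InjOn (fun β : Fin (n + 1) →₀ ℕ => ∑ i, (∏ t ∈ range (i.1 + 1), p t) * β i)
      {β | ∀ i : Fin (n + 1), i.1 < n → β i < p (i.1 + 1)} := by
  intro β hβ γ hγ h
  have extend (β : Fin (n + 1) → ℕ) : ∃ b : ℕ → ℕ, ∀ i : Fin (n + 1), b i = β i :=
    ⟨fun i => if h : i < n + 1 then β ⟨i, h⟩ else 0, fun i => dif_pos i.isLt⟩
  obtain ⟨b, hb⟩ := extend β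
  obtain ⟨c, hc⟩ := extend γ
  simp only [← hb, ← hc, Fin.sum_univ_eq_sum_range fun i => (∏ t ∈ range (i + 1), p t) * b i,
    Fin.sum_univ_eq_sum_range fun i => (∏ t ∈ range (i + 1), p t) * c i] at h
  have hdigits := eq_of_sum_range_mul_prod_eq hp0
    (fun i hi => (hb ⟨i, by omega⟩).trans_lt (hβ _ hi))
    (fun i hi => (hc ⟨i, by omega⟩).trans_lt (hγ _ hi)) h
  ext i
  rw [← hb, ← hc]
  exact hdigits i (by omega)

end MixedRadix

section MonicSubstitution

variable {R σ : Type*} [CommSemiring R] [Fintype σ] {f : σ → R[X]}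

theorem coeff_aeval_eq_sum (f : σ → R[X]) (F : MvPolynomial σ R) (n : ℕ) :
    (MvPolynomial.aeval f F).coeff n =
      ∑ β ∈ F.support, F.coeff β * (∏ i, f i ^ β i).coeff n := by
  rw [MvPolynomial.aeval_def, MvPolynomial.eval₂_eq', finsetSum_coeff]
  simp only [algebraMap_eq, coeff_C_mul]

variable {w : σ → ℕ}

theorem natDegree_prod_pow_of_monic (hf : ∀ i, (f i).Monic) (hw : ∀ i, (f i).natDegree = w i)
    (β : σ → ℕ) : (∏ i, f i ^ β i).natDegree = ∑ i, w i * β i := by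
  rw [natDegree_prod_of_monic _ _ fun i _ => (hf i).pow _]
  exact sum_congr rfl fun i _ => by rw [(hf i).natDegree_pow, hw, mul_comm]

theorem coeff_aeval_of_forall_lt (hf : ∀ i, (f i).Monic) (hw : ∀ i, (f i).natDegree = w i)
    {F : MvPolynomial σ R} {β : σ →₀ ℕ}
    (hβ : ∀ γ ∈ F.support, γ ≠ β → ∑ i, w i * γ i < ∑ i, w i * β i) :
    (MvPolynomial.aeval f F).coeff (∑ i, w i * β i) = F.coeff β := by
  have hmonic : ∀ γ : σ →₀ ℕ, (∏ i, f i ^ γ i).Monic := fun γ =>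
    monic_prod_of_monic _ _ fun i _ => (hf i).pow _
  rw [coeff_aeval_eq_sum, sum_eq_single β]
  · rw [← natDegree_prod_pow_of_monic hf hw, (hmonic β).coeff_natDegree, mul_one]
  · intro γ hγ hne
    rw [coeff_eq_zero_of_natDegree_lt, mul_zero]
    exact (natDegree_prod_pow_of_monic hf hw γ).trans_lt (hβ γ hγ hne)
  · intro hβ
    rw [MvPolynomial.notMem_support_iff.1 hβ, zero_mul]

theorem sum_mul_le_natDegree_aeval (hf : ∀ i, (f i).Monic) (hw : ∀ i, (f i).natDegree = w i)
    {F : MvPolynomial σ R} (hinj : Set.InjOn (fun β : σ →₀ ℕ => ∑ i, w i * β i) F.support)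
    {γ : σ →₀ ℕ} (hγ : γ ∈ F.support) :
    ∑ i, w i * γ i ≤ (MvPolynomial.aeval f F).natDegree := by
  obtain ⟨β, hβ, hmax⟩ := F.support.exists_max_image (fun β => ∑ i, w i * β i) ⟨γ, hγ⟩
  have hcoeff : (MvPolynomial.aeval f F).coeff (∑ i, w i * β i) ≠ 0 := by
    rw [coeff_aeval_of_forall_lt hf hw fun γ hγ hne =>
      (hmax γ hγ).lt_of_ne fun h => hne (hinj hγ hβ h)]
    exact MvPolynomial.mem_support_iff.1 hβ
  exact (hmax γ hγ).trans (le_natDegree_of_ne_zero hcoeff)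

variable {F : MvPolynomial σ R} {S : Set (σ →₀ ℕ)} {τ : σ →₀ ℕ}

theorem sum_mul_lt_natDegree_aeval_of_ne (hf : ∀ i, (f i).Monic)
    (hw : ∀ i, (f i).natDegree = w i) (hS : ↑F.support ⊆ S)
    (hinj : Set.InjOn (fun β : σ →₀ ℕ => ∑ i, w i * β i) S) (hτS : τ ∈ S)
    (hτ : ∑ i, w i * τ i = (MvPolynomial.aeval f F).natDegree) {β : σ →₀ ℕ}
    (hβ : β ∈ F.support) (hne : β ≠ τ) :
    ∑ i, w i * β i < (MvPolynomial.aeval f F).natDegree :=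
  (sum_mul_le_natDegree_aeval hf hw (hinj.mono hS) hβ).lt_of_ne fun h =>
    hne (hinj (hS hβ) hτS (h.trans hτ.symm))

theorem coeff_eq_one_of_sum_mul_eq_natDegree (hf : ∀ i, (f i).Monic)
    (hw : ∀ i, (f i).natDegree = w i) (hS : ↑F.support ⊆ S)
    (hinj : Set.InjOn (fun β : σ →₀ ℕ => ∑ i, w i * β i) S) (hτS : τ ∈ S)
    (hτ : ∑ i, w i * τ i = (MvPolynomial.aeval f F).natDegree)
    (hmonic : (MvPolynomial.aeval f F).Monic) : F.coeff τ = 1 := by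
  rw [← coeff_aeval_of_forall_lt hf hw fun β hβ hne =>
    hτ ▸ sum_mul_lt_natDegree_aeval_of_ne hf hw hS hinj hτS hτ hβ hne, hτ,
    hmonic.coeff_natDegree]

end MonicSubstitution

theorem MvPolynomial.support_sub_monomial_of_coeff_eq {R σ : Type*} [CommRing R] [DecidableEq σ]
    {F : MvPolynomial σ R} {τ : σ →₀ ℕ} {a : R} (h : F.coeff τ = a) :
    (F - monomial τ a).support = F.support.erase τ := by
  ext β
  rw [mem_erase, mem_support_iff, mem_support_iff, coeff_sub, coeff_monomial]
  by_cases hβ : β = τ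
  · simp [hβ, h]
  · simp [hβ, Ne.symm hβ]

theorem MvPolynomial.degreeOf_eq_of_sum_mul_le {R σ : Type*} [CommSemiring R] [Fintype σ]
    {w : σ → ℕ} {F : MvPolynomial σ R} {m : σ} {d : ℕ} (hm : 0 < w m)
    (hle : ∀ β ∈ F.support, ∑ i, w i * β i ≤ w m * d) (hd : F.coeff (Finsupp.single m d) ≠ 0) :
    F.degreeOf m = d := by
  refine le_antisymm (degreeOf_le_iff.2 fun β hβ => Nat.le_of_mul_le_mul_left ?_ hm) ?_
  · exact (single_le_sum (f := fun i => w i * β i) (fun _ _ => Nat.zero_le _) (mem_univ m)).trans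
      (hle β hβ)
  · simpa using monomial_le_degreeOf m (mem_support_iff.2 hd)

-- Variable `i : Fin k` stands for `y_{i+1}`.
/-- Lemma `F-Phi`, assertions (3) and (4): in the expansion setup, if `g ∈ R[y]` is monic of
degree `p₁p₂⋯p_{k-1}·d` with `d ≥ 1`, and `F` is the canonical pre-image of `g`
(`π F = g` and `deg_{y_j} F < p_j` for `1 ≤ j ≤ k-1`), then `F`, viewed as a polynomial in
`y_k`, is monic of degree `d` (its coefficient on the monomial `y_k^d` is `1` and its degree
in `y_k` is `d`), and every monomial `y₁^{β₁}⋯y_k^{β_k}` occurring in `F − y_k^d` satisfies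
`Σ_{i=1}^{j} p₀p₁⋯p_{i-1}·β_i < p₁p₂⋯p_j` for each `1 ≤ j ≤ k-1` and
`Σ_{i=1}^{k} p₀p₁⋯p_{i-1}·β_i < p₁p₂⋯p_{k-1}·d`.
(Variables are indexed by `Fin k`, variable `i` standing for `y_{i+1}`.) -/
theorem canonical_preimage_monic_and_weighted_bounds {R : Type*} [CommRing R]
    (k : ℕ) (hk : 1 ≤ k)
    (p : ℕ → ℕ) (hp0 : p 0 = 1) (hp : ∀ i, 1 ≤ i → i ≤ k - 1 → 0 < p i)
    (f : Fin k → Polynomial R)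
    (hmonic : ∀ i, (f i).Monic)
    (hdeg : ∀ i : Fin k, (f i).natDegree = ∏ t ∈ Finset.range (i.1 + 1), p t)
    (d : ℕ) (hd : 1 ≤ d)
    (g : Polynomial R) (hgmonic : g.Monic)
    (hgdeg : g.natDegree = (∏ t ∈ Finset.Icc 1 (k - 1), p t) * d)
    (F : MvPolynomial (Fin k) R)
    (hF : MvPolynomial.aeval f F = g)
    (hFdeg : ∀ i : Fin k, i.1 + 1 ≤ k - 1 → MvPolynomial.degreeOf i F < p (i.1 + 1)) :
    MvPolynomial.coeff (Finsupp.single (⟨k - 1, by omega⟩ : Fin k) d) F = 1 ∧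
    MvPolynomial.degreeOf (⟨k - 1, by omega⟩ : Fin k) F = d ∧
    ∀ β ∈ (F - MvPolynomial.monomial
        (Finsupp.single (⟨k - 1, by omega⟩ : Fin k) d) (1 : R)).support,
      (∀ j, 1 ≤ j → j ≤ k - 1 →
        (∑ i : Fin k, if i.1 < j then (∏ t ∈ Finset.range (i.1 + 1), p t) * β i else 0)
          < ∏ t ∈ Finset.Icc 1 j, p t) ∧
      (∑ i : Fin k, (∏ t ∈ Finset.range (i.1 + 1), p t) * β i)
          < (∏ t ∈ Finset.Icc 1 (k - 1), p t) * d := by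
  obtain ⟨n, rfl⟩ : ∃ n, k = n + 1 := ⟨k - 1, by omega⟩
  subst hF
  simp only [Nat.add_sub_cancel, ← prod_range_succ_eq_prod_Icc hp0] at hp hgdeg hFdeg ⊢
  set m : Fin (n + 1) := ⟨n, by omega⟩
  set S := {β : Fin (n + 1) →₀ ℕ | ∀ i : Fin (n + 1), i.1 < n → β i < p (i.1 + 1)}
  have hinj : Set.InjOn _ S := injOn_sum_fin_mul_prod hp0 n
  have hsupp : ↑F.support ⊆ S := fun β hβ i hi =>
    (MvPolynomial.degreeOf_lt_iff ((Nat.zero_le _).trans_lt (hFdeg i hi))).1 (hFdeg i hi) β hβ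
  have hτS : Finsupp.single m d ∈ S := fun i hi => by
    rw [Finsupp.single_eq_of_ne (Fin.ne_of_lt hi)]
    exact hp _ (by omega) (by omega)
  have hτ : ∑ i, (∏ t ∈ range (i.1 + 1), p t) * Finsupp.single m d i =
      (MvPolynomial.aeval f F).natDegree := by
    rw [hgdeg, Fintype.sum_eq_single m fun i hi => by simp [hi]]
    simp [m]
  have hcoeff := coeff_eq_one_of_sum_mul_eq_natDegree hmonic hdeg hsupp hinj hτS hτ hgmonic
  have hm : 0 < ∏ t ∈ range (n + 1), p t := by
    rw [prod_range_succ_eq_prod_Icc hp0]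
    exact prod_pos fun t ht => hp t (mem_Icc.1 ht).1 (mem_Icc.1 ht).2
  have : Nontrivial R := Polynomial.nontrivial_iff.1 <| nontrivial_of_ne _ 0 <|
    ne_zero_of_natDegree_gt (n := 0) (by rw [hgdeg]; exact Nat.mul_pos hm hd)
  refine ⟨hcoeff, MvPolynomial.degreeOf_eq_of_sum_mul_le hm
    (fun β hβ => hgdeg ▸ sum_mul_le_natDegree_aeval hmonic hdeg (hinj.mono hsupp) hβ)
    (hcoeff ▸ one_ne_zero), fun β hβ => ?_⟩
  rw [MvPolynomial.support_sub_monomial_of_coeff_eq hcoeff, mem_erase] at hβ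
  exact ⟨fun j _ hj => sum_fin_ite_lt_mul_prod_lt hp0 (by omega) fun i hi =>
      hsupp hβ.2 i (by omega),
    hgdeg ▸ sum_mul_lt_natDegree_aeval_of_ne hmonic hdeg hsupp hinj hτS hτ hβ.2 hβ.1⟩
end

section
/- Descent lemma for conjugate products (well-definedness of f_φ over Laurent series, from the Remark-Notation on descending Puiseux factorizations): let p be a positive integer, φ ∈ S_p, ζ ∈ ℂ a primitive p-th root of unity, and for 0 ≤ j ≤ p−1 let φ_j := ζ^j ⋆_p φ ∈ S_p (so φ_j.coeff(m/p) = ζ^{j·m} · φ.coeff(m/p) for all integers m). Then every coefficient of the polynomial ∏_{j=0}^{p−1} (Y − C φ_j) ∈ (HahnSeries ℚ ℂ)[Y] has support contained in ℤ, i.e. lies in the image of ι. -/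
/-!
Write `Φ j = ι_p (ψ j)`, where `ψ j` is a Laurent series in `u = t^(1/p)` and `ι_p` rescales
exponents by `n ↦ n / p`. The hypothesis on the coefficients says that the substitution
`u ↦ ζ u`, a ring automorphism of `ℂ((u))`, sends `ψ j` to `ψ (j + 1)`. It therefore permutes
the factors of `∏ (Y - ψ j)`, so it fixes every coefficient; a Laurent series fixed by `u ↦ ζ u`
only has exponents divisible by `p`, and `ι_p` turns these into integers.
-/

open Polynomial

theorem Set.IsPWO.preimage_orderEmbedding {α β : Type*} [Preorder α] [Preorder β]
    (f : α ↪o β) {s : Set β} (hs : s.IsPWO) : (f ⁻¹' s).IsPWO := fun g => by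
  obtain ⟨m, n, hmn, hle⟩ := hs fun k => ⟨f (g k), (g k).2⟩
  exact ⟨m, n, hmn, f.le_iff_le.mp hle⟩

namespace HahnSeries

theorem exists_embDomain_eq_of_support_subset {Γ Γ' R : Type*} [PartialOrder Γ]
    [PartialOrder Γ'] [Zero R] (f : Γ ↪o Γ') {y : R⟦Γ'⟧} (hy : y.support ⊆ Set.range f) :
    ∃ x : R⟦Γ⟧, embDomain f x = y := by
  refine ⟨⟨fun g => y.coeff (f g), y.isPWO_support.preimage_orderEmbedding f⟩, ?_⟩
  ext b
  by_cases hb : b ∈ Set.range f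
  · obtain ⟨g, rfl⟩ := hb
    exact embDomain_coeff
  · rw [embDomain_of_notMem_range hb]
    exact (Function.notMem_support.mp fun h => hb (hy h)).symm

section Twist

variable {Γ R : Type*} [AddCommMonoid Γ] [PartialOrder Γ] [CommSemiring R]

/-- For `Γ = ℤ` and `χ n = c ^ n` this is the substitution `u ↦ c u`. -/
def twist (χ : Multiplicative Γ →* R) (x : R⟦Γ⟧) : R⟦Γ⟧ where
  coeff g := χ (.ofAdd g) * x.coeff g
  isPWO_support' := x.isPWO_support.mono fun g hg h => hg (by simp [h])

@[simp]
theorem twist_coeff (χ : Multiplicative Γ →* R) (x : R⟦Γ⟧) (g : Γ) :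
    (twist χ x).coeff g = χ (.ofAdd g) * x.coeff g := rfl

theorem support_twist_subset (χ : Multiplicative Γ →* R) (x : R⟦Γ⟧) :
    (twist χ x).support ⊆ x.support := fun g hg h => hg (by simp [h])

theorem twist_mul [IsOrderedCancelAddMonoid Γ] (χ : Multiplicative Γ →* R) (x y : R⟦Γ⟧) :
    twist χ (x * y) = twist χ x * twist χ y := by
  ext g
  have hsub : Finset.antidiagonal (twist χ x).isPWO_support (twist χ y).isPWO_support g ⊆
      Finset.antidiagonal x.isPWO_support y.isPWO_support g :=
    (Finset.antidiagonal_mono_left (support_twist_subset χ x)).trans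
      (Finset.antidiagonal_mono_right (support_twist_subset χ y))
  rw [twist_coeff, coeff_mul, coeff_mul, Finset.mul_sum, Finset.sum_subset hsub]
  · refine Finset.sum_congr rfl fun ij hij => ?_
    rw [twist_coeff, twist_coeff, ← (Finset.mem_antidiagonal.mp hij).2.2, ofAdd_add, map_mul]
    ring
  · intro ij hij hij'
    contrapose! hij'
    exact Finset.mem_antidiagonal.mpr ⟨left_ne_zero_of_mul hij', right_ne_zero_of_mul hij',
      (Finset.mem_antidiagonal.mp hij).2.2⟩

@[simps]
def twistRingHom [IsOrderedCancelAddMonoid Γ] (χ : Multiplicative Γ →* R) : R⟦Γ⟧ →+* R⟦Γ⟧ where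
  toFun := twist χ
  map_one' := by
    ext g
    by_cases hg : g = 0 <;> simp [coeff_one, hg]
  map_mul' := twist_mul χ
  map_zero' := by ext; simp
  map_add' x y := by ext; simp [mul_add]

theorem eq_one_of_twist_eq_self [IsDomain R] {χ : Multiplicative Γ →* R} {x : R⟦Γ⟧}
    (hx : twist χ x = x) {g : Γ} (hg : g ∈ x.support) : χ (.ofAdd g) = 1 :=
  (mul_eq_right₀ hg).mp (by rw [← twist_coeff, hx])

end Twist

end HahnSeries

theorem Polynomial.map_prod_X_sub_C_eq_self_of_perm {ι R : Type*} [Fintype ι] [CommRing R]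
    (σ : R →+* R) (a : ι → R) (e : Equiv.Perm ι) (h : ∀ j, σ (a j) = a (e j)) :
    (∏ j, (X - C (a j))).map σ = ∏ j, (X - C (a j)) := by
  simp only [Polynomial.map_prod, Polynomial.map_sub, map_X, map_C, h]
  exact Equiv.prod_comp e fun j => X - C (a j)

theorem IsPrimitiveRoot.pow_val_add_one {M : Type*} [CommMonoid M] {ζ : M} {p : ℕ} [NeZero p]
    (hζ : IsPrimitiveRoot ζ p) (j : Fin p) : ζ ^ (j + 1 : Fin p).val = ζ ^ j.val * ζ := by
  rw [← pow_succ, ← pow_mod_orderOf ζ (j.val + 1), ← hζ.eq_orderOf, Fin.val_add, Fin.val_one',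
    Nat.add_mod_mod]

theorem dvd_of_mem_support_coeff_prod_X_sub_C {K : Type*} [Field K] {p : ℕ} [NeZero p] {ζ : K}
    (hζ : IsPrimitiveRoot ζ p) (ψ : Fin p → HahnSeries ℤ K)
    (hψ : ∀ j n, (ψ (j + 1)).coeff n = ζ ^ n * (ψ j).coeff n) (i : ℕ) :
    ∀ n ∈ ((∏ j, (X - C (ψ j))).coeff i).support, (p : ℤ) ∣ n := by
  intro n hn
  set χ : Multiplicative ℤ →* K :=
    (Units.coeHom K).comp (zpowersHom Kˣ (Units.mk0 ζ (hζ.ne_zero (NeZero.ne p))))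
  have hχ (n : ℤ) : χ (.ofAdd n) = ζ ^ n := by simp [χ]
  have hshift (j : Fin p) : HahnSeries.twistRingHom χ (ψ j) = ψ (j + 1) := by
    ext n
    rw [HahnSeries.twistRingHom_apply, HahnSeries.twist_coeff, hχ, hψ]
  have hfixed := congrArg (coeff · i)
    (map_prod_X_sub_C_eq_self_of_perm _ _ (Equiv.addRight 1) hshift)
  simp only [coeff_map, HahnSeries.twistRingHom_apply] at hfixed
  exact (hζ.zpow_eq_one_iff_dvd n).mp (hχ n ▸ HahnSeries.eq_one_of_twist_eq_self hfixed hn)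

@[simps]
def intCastDiv (p : ℕ) : ℤ →+ ℚ where
  toFun n := n / p
  map_zero' := by simp
  map_add' a b := by push_cast; exact add_div _ _ _

theorem intCastDiv_strictMono {p : ℕ} (hp : 0 < p) : StrictMono (intCastDiv p) :=
  fun _ _ h => div_lt_div_of_pos_right (Int.cast_lt.mpr h) (Nat.cast_pos.mpr hp)

theorem conjugate_product_has_integer_support_general (p : ℕ) (hp : 0 < p)
    (φ : HahnSeries ℚ ℂ)
    (ζ : ℂ) (hζ : IsPrimitiveRoot ζ p)
    (Φ : Fin p → HahnSeries ℚ ℂ)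
    (hΦsupp : ∀ j : Fin p, ∀ q ∈ (Φ j).support, ∃ m : ℤ, q = (m : ℚ) / p)
    (hΦ : ∀ (j : Fin p) (m : ℤ),
      (Φ j).coeff ((m : ℚ) / p) = ζ ^ ((j.1 : ℤ) * m) * φ.coeff ((m : ℚ) / p)) :
    ∀ i : ℕ,
      ∀ q ∈ ((∏ j : Fin p, (Polynomial.X - Polynomial.C (Φ j))).coeff i).support,
        ∃ m : ℤ, q = (m : ℚ) := by
  have : NeZero p := ⟨hp.ne'⟩
  have hmono := intCastDiv_strictMono hp
  set ι := HahnSeries.embDomainRingHom (R := ℂ) (intCastDiv p) hmono.injective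
    fun _ _ => hmono.le_iff_le
  have hlift (j : Fin p) : ∃ ψ, ι ψ = Φ j := by
    refine HahnSeries.exists_embDomain_eq_of_support_subset _ fun q hq => ?_
    obtain ⟨m, rfl⟩ := hΦsupp j q hq
    exact ⟨m, rfl⟩
  choose ψ hψ using hlift
  have hψ_coeff (j : Fin p) (n : ℤ) : (ψ j).coeff n = (Φ j).coeff (n / p) := by
    rw [← hψ j]
    exact HahnSeries.embDomain_coeff.symm
  have hshift (j : Fin p) (n : ℤ) : (ψ (j + 1)).coeff n = ζ ^ n * (ψ j).coeff n := by
    rw [hψ_coeff, hψ_coeff, hΦ, hΦ, zpow_mul, zpow_mul, zpow_natCast, zpow_natCast,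
      hζ.pow_val_add_one, mul_zpow]
    ring
  intro i q hq
  rw [show ∏ j, (X - C (Φ j)) = (∏ j, (X - C (ψ j))).map ι by simp [Polynomial.map_prod, hψ],
    coeff_map] at hq
  obtain ⟨n, hn, rfl⟩ := HahnSeries.support_embDomain_subset hq
  obtain ⟨m, rfl⟩ := dvd_of_mem_support_coeff_prod_X_sub_C hζ ψ hshift i n hn
  exact ⟨m, by simp [hp.ne']⟩

/-- Descent lemma for conjugate products (well-definedness of `f_φ` over Laurent series):
let `p` be a positive integer, `φ` a Puiseux series with support in `(1/p)ℤ`, `ζ ∈ ℂ` a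
primitive `p`-th root of unity, and `Φ j = ζ^j ⋆_p φ` (for `0 ≤ j ≤ p-1`) the conjugates
of `φ`, so that `(Φ j).coeff(m/p) = ζ^(j·m) · φ.coeff(m/p)` for all integers `m`. Then
every coefficient of the polynomial `∏ⱼ (Y − Φ j)` has support contained in `ℤ`, i.e. is
a Laurent series. -/
theorem conjugate_product_has_integer_support (p : ℕ) (hp : 0 < p)
    (φ : HahnSeries ℚ ℂ)
    (hφ : ∀ q ∈ φ.support, ∃ m : ℤ, q = (m : ℚ) / p)
    (ζ : ℂ) (hζ : IsPrimitiveRoot ζ p)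
    (Φ : Fin p → HahnSeries ℚ ℂ)
    (hΦsupp : ∀ j : Fin p, ∀ q ∈ (Φ j).support, ∃ m : ℤ, q = (m : ℚ) / p)
    (hΦ : ∀ (j : Fin p) (m : ℤ),
      (Φ j).coeff ((m : ℚ) / p) = ζ ^ ((j.1 : ℤ) * m) * φ.coeff ((m : ℚ) / p)) :
    ∀ i : ℕ,
      ∀ q ∈ ((∏ j : Fin p, (Polynomial.X - Polynomial.C (Φ j))).coeff i).support,
        ∃ m : ℤ, q = (m : ℚ) :=
  conjugate_product_has_integer_support_general p hp φ ζ hζ Φ hΦsupp hΦ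
end

section
/- Lemma (unique bounded representation; delta-omega-lemma assertion (1) together with the representation claim used in the proof of Theorem 4.3): let k ≥ 0 and ω₀, ω₁, …, ω_k ∈ ℤ with ω₀ > 0, and for 1 ≤ j ≤ k let p_j be the least positive integer α such that α·ω_j ∈ ℤω₀ + ℤω₁ + ⋯ + ℤω_{j−1}. Then for every ω̃ ∈ ℤω₀ + ℤω₁ + ⋯ + ℤω_k there exist a unique integer β₀ and unique integers β₁, …, β_k with 0 ≤ β_j < p_j for every 1 ≤ j ≤ k such that ω̃ = β₀ω₀ + β₁ω₁ + ⋯ + β_kω_k. -/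
/-!
Let `Hⱼ = ℤω₀ + ⋯ + ℤω_{j-1}`. Since `Aⱼ` is the least positive `α` with `α • ωⱼ ∈ Hⱼ`, every
`c • ωⱼ` is congruent modulo `Hⱼ` to `(c % Aⱼ) • ωⱼ`, and two such multiples with coefficients in
`[0, Aⱼ)` are congruent only if the coefficients agree. Peeling off the top coefficient and
inducting on `k` gives existence and uniqueness of the bounded representation; the remaining
coefficient `β₀` is determined because `ω₀ ≠ 0`.
-/

open Finset

section AddSubgroup

variable {G : Type*} [AddCommGroup G] {H : AddSubgroup G} {x : G} {A : ℤ}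

theorem AddSubgroup.zsmul_sub_emod_zsmul_mem (hA : A • x ∈ H) (c : ℤ) :
    c • x - (c % A) • x ∈ H := by
  have hc : c - c % A = (c / A) * A := by rw [Int.emod_def]; ring
  rw [← sub_smul, hc, mul_zsmul]
  exact H.zsmul_mem hA _

theorem AddSubgroup.eq_of_sub_zsmul_mem (hA : IsLeast {α : ℤ | 0 < α ∧ α • x ∈ H} A)
    {r r' : ℤ} (hr : 0 ≤ r) (hrA : r < A) (hr' : 0 ≤ r') (hr'A : r' < A)
    (h : (r - r') • x ∈ H) : r = r' := by
  by_contra hne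
  rcases lt_or_gt_of_ne hne with hlt | hgt
  · have h' : (r' - r) • x ∈ H := by rw [← neg_sub, neg_zsmul]; exact H.neg_mem h
    have := hA.2 ⟨sub_pos.2 hlt, h'⟩
    omega
  · have := hA.2 ⟨sub_pos.2 hgt, h⟩
    omega

end AddSubgroup

def prefixCombination (ω : ℕ → ℤ) (j : ℕ) : (ℕ → ℤ) →+ ℤ where
  toFun β := ∑ i ∈ range j, β i * ω i
  map_zero' := by simp
  map_add' β β' := by simp [add_mul, sum_add_distrib]

def BoundedDigits (A : ℕ → ℤ) (k : ℕ) (β : ℕ → ℤ) : Prop :=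
  ∀ j, 1 ≤ j → j ≤ k → 0 ≤ β j ∧ β j < A j

section prefixCombination

theorem prefixCombination_apply (ω : ℕ → ℤ) (j : ℕ) (β : ℕ → ℤ) :
    prefixCombination ω j β = ∑ i ∈ range j, β i * ω i := rfl

theorem prefixCombination_succ (ω : ℕ → ℤ) (j : ℕ) (β : ℕ → ℤ) :
    prefixCombination ω (j + 1) β = prefixCombination ω j β + β j * ω j :=
  sum_range_succ _ _

theorem sum_fin_eq_prefixCombination (ω : ℕ → ℤ) (n : ℕ) (y : Fin (n + 1) → ℤ) :
    ∑ j : Fin (n + 1), y j * ω j =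
      prefixCombination ω (n + 1) (fun i => y (Fin.ofNat (n + 1) i)) := by
  rw [prefixCombination_apply,
    ← Fin.sum_univ_eq_sum_range (fun i => y (Fin.ofNat (n + 1) i) * ω i)]
  simp only [Fin.ofNat_val_eq_self]

variable {ω : ℕ → ℤ} {A : ℕ → ℤ}

theorem prefixCombination_congr {j : ℕ} {β β' : ℕ → ℤ} (h : ∀ i < j, β i = β' i) :
    prefixCombination ω j β = prefixCombination ω j β' := by
  simp only [prefixCombination_apply]
  exact sum_congr rfl fun i hi => by rw [h i (mem_range.1 hi)]

theorem boundedDigits_of_fin {k : ℕ} {y : Fin (k + 1) → ℤ}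
    (hy : ∀ j : Fin (k + 1), 1 ≤ j.1 → 0 ≤ y j ∧ y j < A j.1) :
    BoundedDigits A k (fun i => y (Fin.ofNat (k + 1) i)) := fun j h1 h2 => by
  have hj : j % (k + 1) = j := Nat.mod_eq_of_lt (by omega)
  simpa [hj] using hy (Fin.ofNat (k + 1) j) (by simpa [hj])

theorem exists_boundedDigits_prefixCombination_eq {k : ℕ}
    (hA : ∀ j, 1 ≤ j → j ≤ k →
      IsLeast {α : ℤ | 0 < α ∧ α • ω j ∈ (prefixCombination ω j).range} (A j))
    {m : ℤ} (hm : m ∈ (prefixCombination ω (k + 1)).range) :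
    ∃ β, BoundedDigits A k β ∧ prefixCombination ω (k + 1) β = m := by
  induction k generalizing m with
  | zero =>
    obtain ⟨γ, rfl⟩ := hm
    exact ⟨γ, fun j h1 h2 => by omega, rfl⟩
  | succ k ih =>
    obtain ⟨⟨hApos, hAmem⟩, -⟩ := hA (k + 1) le_add_self le_rfl
    obtain ⟨γ, rfl⟩ := hm
    set r := γ (k + 1) % A (k + 1)
    have hlower : prefixCombination ω (k + 2) γ - r * ω (k + 1) ∈
        (prefixCombination ω (k + 1)).range := by
      rw [prefixCombination_succ, add_sub_assoc]
      exact add_mem ⟨γ, rfl⟩ (AddSubgroup.zsmul_sub_emod_zsmul_mem hAmem _)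
    obtain ⟨β, hβ, hβm⟩ := ih (fun j h1 h2 => hA j h1 (by omega)) hlower
    refine ⟨Function.update β (k + 1) r, fun j h1 h2 => ?_, ?_⟩
    · rcases eq_or_lt_of_le h2 with rfl | hj
      · simpa using ⟨Int.emod_nonneg _ hApos.ne', Int.emod_lt_of_pos _ hApos⟩
      · rw [Function.update_of_ne (by omega)]
        exact hβ j h1 (by omega)
    · rw [prefixCombination_succ, Function.update_self,
        prefixCombination_congr fun i hi => Function.update_of_ne (by omega) _ _, hβm,
        sub_add_cancel]

theorem eq_of_prefixCombination_eq_of_boundedDigits {k : ℕ} (hω0 : ω 0 ≠ 0)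
    (hA : ∀ j, 1 ≤ j → j ≤ k →
      IsLeast {α : ℤ | 0 < α ∧ α • ω j ∈ (prefixCombination ω j).range} (A j))
    {β β' : ℕ → ℤ} (hβ : BoundedDigits A k β) (hβ' : BoundedDigits A k β')
    (h : prefixCombination ω (k + 1) β = prefixCombination ω (k + 1) β') :
    ∀ j ≤ k, β j = β' j := by
  induction k with
  | zero =>
    intro j hj
    obtain rfl : j = 0 := by omega
    simpa [prefixCombination_apply, hω0] using h
  | succ k ih =>
    have htop :
        (β (k + 1) - β' (k + 1)) • ω (k + 1) ∈ (prefixCombination ω (k + 1)).range := by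
      refine ⟨β' - β, ?_⟩
      rw [prefixCombination_succ, prefixCombination_succ ω (k + 1)] at h
      rw [map_sub, smul_eq_mul, sub_mul]
      linarith
    obtain ⟨h0, hlt⟩ := hβ (k + 1) le_add_self le_rfl
    obtain ⟨h0', hlt'⟩ := hβ' (k + 1) le_add_self le_rfl
    have heq := AddSubgroup.eq_of_sub_zsmul_mem (hA (k + 1) le_add_self le_rfl)
      h0 hlt h0' hlt' htop
    rw [prefixCombination_succ, prefixCombination_succ ω (k + 1), heq, add_left_inj] at h
    intro j hj
    rcases eq_or_lt_of_le hj with rfl | hj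
    · exact heq
    · exact ih (fun j h1 h2 => hA j h1 (by omega)) (fun j h1 h2 => hβ j h1 (by omega))
        (fun j h1 h2 => hβ' j h1 (by omega)) h j (by omega)

end prefixCombination

/-- Lemma `delta-omega-lemma`, assertion (1) together with the unique bounded representation
claim: let `ω₀, …, ω_k` be integers with `ω₀ > 0`, and for `1 ≤ j ≤ k` let `A j` be the
least positive integer `α` with `α·ω_j ∈ ℤω₀ + ⋯ + ℤω_{j-1}`. Then every element `m` of
`ℤω₀ + ⋯ + ℤω_k` has a unique representation `m = β₀ω₀ + β₁ω₁ + ⋯ + β_kω_k` with `β₀ ∈ ℤ`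
and `0 ≤ β_j < A j` for `1 ≤ j ≤ k`. -/
theorem unique_bounded_representation (k : ℕ) (ω : ℕ → ℤ) (hω0 : 0 < ω 0)
    (A : ℕ → ℤ)
    (hA : ∀ j, 1 ≤ j → j ≤ k →
      IsLeast {α : ℤ | 0 < α ∧ ∃ β : ℕ → ℤ,
        α * ω j = ∑ i ∈ Finset.range j, β i * ω i} (A j)) :
    ∀ m : ℤ, (∃ γ : ℕ → ℤ, m = ∑ i ∈ Finset.range (k + 1), γ i * ω i) →
      ∃! β : Fin (k + 1) → ℤ,
        (∀ j : Fin (k + 1), 1 ≤ j.1 → 0 ≤ β j ∧ β j < A j.1) ∧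
        m = ∑ j : Fin (k + 1), β j * ω j.1 := by
  have hA' : ∀ j, 1 ≤ j → j ≤ k →
      IsLeast {α : ℤ | 0 < α ∧ α • ω j ∈ (prefixCombination ω j).range} (A j) := by
    simpa only [AddMonoidHom.mem_range, prefixCombination_apply, smul_eq_mul, eq_comm] using hA
  rintro m ⟨γ, rfl⟩
  obtain ⟨β, hβ, hβm⟩ := exists_boundedDigits_prefixCombination_eq hA' ⟨γ, rfl⟩
  refine ⟨fun j => β j, ⟨fun j hj => hβ j hj (by omega), ?_⟩, ?_⟩
  · rw [sum_fin_eq_prefixCombination, ← prefixCombination_apply, ← hβm]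
    exact prefixCombination_congr fun i hi => by simp [Nat.mod_eq_of_lt hi]
  · rintro y ⟨hy, hym⟩
    have hyβ := eq_of_prefixCombination_eq_of_boundedDigits hω0.ne' hA'
      (boundedDigits_of_fin hy) hβ
      (by rw [← sum_fin_eq_prefixCombination, ← hym, hβm, prefixCombination_apply])
    funext j
    simpa using hyβ j (Nat.le_of_lt_succ j.2)
end

section
/- Lemma (delta-omega-lemma, assertion (2)): let δ be a semidegree on R with δ(x) > 0, let f₁, …, f_k be nonzero elements of R, put ω₀ := δ(x) and ω_j := δ(f_j), and let p_j be the least positive integer α with α·ω_j ∈ ℤω₀ + ⋯ + ℤω_{j−1} (1 ≤ j ≤ k). Let (β₀^{(1)}, …, β_k^{(1)}), …, (β₀^{(s)}, …, β_k^{(s)}) be finitely many pairwise distinct tuples with β₀^{(t)} ∈ ℤ and 0 ≤ β_j^{(t)} < p_j for 1 ≤ j ≤ k, and let c₁, …, c_s ∈ ℂ be nonzero. Then the element g := Σ_{t=1}^{s} c_t · x^{β₀^{(t)}} · f₁^{β₁^{(t)}} ⋯ f_k^{β_k^{(t)}} of R is nonzero and δ(g) = max_{1 ≤ t ≤ s}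 (β₀^{(t)}ω₀ + β₁^{(t)}ω₁ + ⋯ + β_k^{(t)}ω_k). -/
noncomputable section

/-- A semidegree on `ℂ[x,x⁻¹][y]`: completely multiplicative on nonzero elements,
subadditive with respect to `max` on sums, and vanishing on nonzero constants. -/
def IsSemidegree (δ : RR → ℤ) : Prop :=
  (∀ f g : RR, f ≠ 0 → g ≠ 0 → δ (f * g) = δ f + δ g) ∧
  (∀ f g : RR, f ≠ 0 → g ≠ 0 → f + g ≠ 0 → δ (f + g) ≤ max (δ f) (δ g)) ∧
  (∀ c : ℂ, c ≠ 0 → δ (Polynomial.C (LaurentPolynomial.C c)) = 0)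

namespace SemidegreeAux

variable {δ : RR → ℤ}

lemma delta_one (hδ : IsSemidegree δ) : δ 1 = 0 := by
  have h := hδ.1 1 1 one_ne_zero one_ne_zero
  rw [one_mul] at h; omega

lemma delta_neg (hδ : IsSemidegree δ) {f : RR} (hf : f ≠ 0) : δ (-f) = δ f := by
  have hneg1 : δ (-1 : RR) = 0 := by
    have h := hδ.2.2 (-1) (by norm_num)
    simpa using h
  have h := hδ.1 (-1) f (by norm_num) hf
  rw [show (-1 : RR) * f = -f by ring, hneg1] at h
  omega

lemma delta_pow (hδ : IsSemidegree δ) {f : RR} (hf : f ≠ 0) (n : ℕ) :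
    δ (f ^ n) = (n : ℤ) * δ f := by
  induction n with
  | zero => simpa using delta_one hδ
  | succ n ih =>
    rw [pow_succ, hδ.1 _ _ (pow_ne_zero n hf) hf, ih]
    push_cast; ring

lemma CT_ne_zero (n : ℤ) : (Polynomial.C (LaurentPolynomial.T n) : RR) ≠ 0 :=
  Polynomial.C_ne_zero.mpr (LaurentPolynomial.isUnit_T n).ne_zero

lemma delta_T (hδ : IsSemidegree δ) (n : ℤ) :
    δ (Polynomial.C (LaurentPolynomial.T n)) = n * δ xR := by
  have hadd : ∀ a b : ℤ,
      δ (Polynomial.C (LaurentPolynomial.T (a + b))) =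
      δ (Polynomial.C (LaurentPolynomial.T a)) + δ (Polynomial.C (LaurentPolynomial.T b)) := by
    intro a b
    rw [LaurentPolynomial.T_add, map_mul]
    exact hδ.1 _ _ (CT_ne_zero a) (CT_ne_zero b)
  let φ : ℤ →+ ℤ := AddMonoidHom.mk' (fun n => δ (Polynomial.C (LaurentPolynomial.T n))) hadd
  have : φ n = n • φ 1 := by
    rw [← map_zsmul φ n 1]; norm_num
  simpa [φ, xR, smul_eq_mul, mul_comm] using this

lemma delta_prod (hδ : IsSemidegree δ) {ι : Type} (S : Finset ι) (g : ι → RR)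
    (hg : ∀ i ∈ S, g i ≠ 0) : δ (∏ i ∈ S, g i) = ∑ i ∈ S, δ (g i) := by
  induction S using Finset.cons_induction with
  | empty => simpa using delta_one hδ
  | cons a S ha ih =>
    rw [Finset.prod_cons, Finset.sum_cons,
      hδ.1 _ _ (hg a (Finset.mem_cons_self a S))
        (Finset.prod_ne_zero_iff.mpr fun i hi => hg i (Finset.mem_cons_of_mem hi)),
      ih fun i hi => hg i (Finset.mem_cons_of_mem hi)]

lemma delta_sum (hδ : IsSemidegree δ) {ι : Type} [DecidableEq ι] (m : ι → RR)
    (S : Finset ι) (hS : S.Nonempty) (hm : ∀ t ∈ S, m t ≠ 0)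
    (hinj : ∀ t ∈ S, ∀ t' ∈ S, t ≠ t' → δ (m t) ≠ δ (m t')) :
    (∑ t ∈ S, m t) ≠ 0 ∧ (∃ t ∈ S, δ (∑ t ∈ S, m t) = δ (m t)) ∧
      ∀ t ∈ S, δ (m t) ≤ δ (∑ t ∈ S, m t) := by
  induction S using Finset.strongInduction with
  | _ S ih =>
  obtain ⟨t₀, ht₀S, hmax⟩ := S.exists_max_image (fun t => δ (m t)) hS
  by_cases hS' : (S.erase t₀).Nonempty
  · obtain ⟨h1, ⟨t', ht'mem, ht'eq⟩, hub⟩ :=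
      ih (S.erase t₀) (Finset.erase_ssubset ht₀S) hS'
        (fun t ht => hm t (Finset.mem_of_mem_erase ht))
        (fun t ht t'' ht'' => hinj t (Finset.mem_of_mem_erase ht) t''
          (Finset.mem_of_mem_erase ht''))
    have ht'S : t' ∈ S := Finset.mem_of_mem_erase ht'mem
    have ht'ne : t' ≠ t₀ := Finset.ne_of_mem_erase ht'mem
    have hlt : δ (m t') < δ (m t₀) :=
      lt_of_le_of_ne (hmax t' ht'S) (hinj t' ht'S t₀ ht₀S ht'ne)
    set r : RR := ∑ t ∈ S.erase t₀, m t with hr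
    have hsum : ∑ t ∈ S, m t = m t₀ + r := (Finset.add_sum_erase S m ht₀S).symm
    have hrlt : δ r < δ (m t₀) := by rw [ht'eq]; exact hlt
    have hg0 : m t₀ + r ≠ 0 := by
      intro h
      have h2 : m t₀ = -r := eq_neg_of_add_eq_zero_left h
      have : δ (m t₀) = δ r := by rw [h2, delta_neg hδ h1]
      omega
    have hle : δ (m t₀ + r) ≤ δ (m t₀) := by
      have h2 := hδ.2.1 (m t₀) r (hm t₀ ht₀S) h1 hg0
      omega
    have hge : δ (m t₀) ≤ δ (m t₀ + r) := by
      have hmr : m t₀ = (m t₀ + r) + (-r) := by ring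
      have h2 := hδ.2.1 (m t₀ + r) (-r) hg0 (neg_ne_zero.mpr h1)
        (by rw [← hmr]; exact hm t₀ ht₀S)
      rw [← hmr, delta_neg hδ h1] at h2
      omega
    refine ⟨hsum ▸ hg0, ⟨t₀, ht₀S, by rw [hsum]; omega⟩, fun t ht => ?_⟩
    rw [hsum]
    exact le_trans (hmax t ht) hge
  · have hSsing : S = {t₀} := by
      rcases (Finset.erase_eq_empty_iff S t₀).mp (Finset.not_nonempty_iff_eq_empty.mp hS') with h | h
      · exact absurd h (Finset.nonempty_iff_ne_empty.mp hS)
      · exact h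
    subst hSsing
    simp only [Finset.sum_singleton]
    exact ⟨hm t₀ (Finset.mem_singleton_self t₀), ⟨t₀, Finset.mem_singleton_self t₀, rfl⟩,
      fun t ht => by rw [Finset.mem_singleton.mp ht]⟩

end SemidegreeAux

open SemidegreeAux in
/-- Lemma `delta-omega-lemma`, assertion (2): let `δ` be a semidegree on `ℂ[x,x⁻¹][y]` with
`δ(x) > 0`, `f₁, …, f_k` nonzero, `ω₀ = δ(x)`, `ω_j = δ(f_j)`, and `P j` the least positive
integer `α` with `α·ω_j ∈ ℤω₀ + ⋯ + ℤω_{j-1}`. Then for pairwise distinct exponent tuples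
`B t = (β₀, (β₁,…,β_k))` with `β₀ ∈ ℤ`, `0 ≤ β_j < P j`, and nonzero constants `c t`, the
element `g = Σ_t c_t · x^{β₀^{(t)}} · f₁^{β₁^{(t)}} ⋯ f_k^{β_k^{(t)}}` is nonzero and
`δ(g)` is the maximum of the weights `β₀^{(t)}ω₀ + β₁^{(t)}ω₁ + ⋯ + β_k^{(t)}ω_k`.
(Here `f` is indexed by `Fin k`, `f i` standing for `f_{i+1}`.) -/
theorem semidegree_of_sum_of_monomials
    (δ : RR → ℤ) (hδ : IsSemidegree δ) (hx : 0 < δ xR)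
    (k : ℕ) (f : Fin k → RR) (hf : ∀ i, f i ≠ 0)
    (P : Fin k → ℤ)
    (hP : ∀ j : Fin k, IsLeast {α : ℤ | 0 < α ∧ ∃ (γ₀ : ℤ) (γ : Fin k → ℤ),
      α * δ (f j) = γ₀ * δ xR +
        ∑ i : Fin k, if i.1 < j.1 then γ i * δ (f i) else 0} (P j))
    (s : ℕ) (hs : 0 < s)
    (B : Fin s → ℤ × (Fin k → ℕ)) (hB : Function.Injective B)
    (hBlt : ∀ (t : Fin s) (i : Fin k), ((B t).2 i : ℤ) < P i)
    (c : Fin s → ℂ) (hc : ∀ t, c t ≠ 0) :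
    (∑ t, Polynomial.C (LaurentPolynomial.C (c t) * LaurentPolynomial.T (B t).1) *
        ∏ i, f i ^ (B t).2 i) ≠ 0 ∧
    IsGreatest
      (Set.range fun t : Fin s =>
        (B t).1 * δ xR + ∑ i : Fin k, ((B t).2 i : ℤ) * δ (f i))
      (δ (∑ t, Polynomial.C (LaurentPolynomial.C (c t) * LaurentPolynomial.T (B t).1) *
        ∏ i, f i ^ (B t).2 i)) := by
  classical
  set w : Fin s → ℤ := fun t => (B t).1 * δ xR + ∑ i : Fin k, ((B t).2 i : ℤ) * δ (f i)
    with hw_def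
  set m : Fin s → RR := fun t =>
    Polynomial.C (LaurentPolynomial.C (c t) * LaurentPolynomial.T (B t).1) *
      ∏ i, f i ^ (B t).2 i with hm_def
  -- each monomial is nonzero
  have hm0 : ∀ t, m t ≠ 0 := by
    intro t
    apply mul_ne_zero
    · apply Polynomial.C_ne_zero.mpr
      exact mul_ne_zero (((isUnit_iff_ne_zero.mpr (hc t)).map LaurentPolynomial.C).ne_zero)
        ((LaurentPolynomial.isUnit_T (B t).1).ne_zero)
    · exact Finset.prod_ne_zero_iff.mpr fun i _ => pow_ne_zero _ (hf i)
  -- δ of each monomial is its weight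
  have hmw : ∀ t, δ (m t) = w t := by
    intro t
    have h1 : m t = Polynomial.C (LaurentPolynomial.C (c t)) *
        Polynomial.C (LaurentPolynomial.T (B t).1) * ∏ i, f i ^ (B t).2 i := by
      simp only [hm_def, map_mul]
    rw [h1, hδ.1 _ _
        (mul_ne_zero (Polynomial.C_ne_zero.mpr
          (((isUnit_iff_ne_zero.mpr (hc t)).map LaurentPolynomial.C).ne_zero))
          (CT_ne_zero (B t).1))
        (Finset.prod_ne_zero_iff.mpr fun i _ => pow_ne_zero _ (hf i)),
      hδ.1 _ _ (Polynomial.C_ne_zero.mpr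
          (((isUnit_iff_ne_zero.mpr (hc t)).map LaurentPolynomial.C).ne_zero))
        (CT_ne_zero (B t).1),
      hδ.2.2 (c t) (hc t), delta_T hδ,
      delta_prod hδ _ _ (fun i _ => pow_ne_zero _ (hf i))]
    simp only [hw_def, zero_add]
    congr 1
    exact Finset.sum_congr rfl fun i _ => delta_pow hδ (hf i) _
  -- key: equal weights with distinct exponent tuples is impossible
  have key : ∀ t t' : Fin s, ∀ j : Fin k, (B t').2 j < (B t).2 j →
      (∀ i : Fin k, j.1 < i.1 → (B t).2 i = (B t').2 i) → w t = w t' → False := by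
    intro t t' j hgt hagree hww
    set α : ℤ := ((B t).2 j : ℤ) - ((B t').2 j : ℤ) with hα_def
    have hα : 0 < α := by
      have : ((B t').2 j : ℤ) < ((B t).2 j : ℤ) := by exact_mod_cast hgt
      omega
    have hαP : α < P j := by
      have := hBlt t j
      have : ((B t').2 j : ℤ) ≥ 0 := Int.ofNat_nonneg _
      omega
    set T : ℤ := ∑ i : Fin k,
      (if i.1 < j.1 then (((B t).2 i : ℤ) - ((B t').2 i : ℤ)) * δ (f i) else 0) with hT_def
    have h1 : (∑ i : Fin k, ((B t).2 i : ℤ) * δ (f i)) -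
        (∑ i : Fin k, ((B t').2 i : ℤ) * δ (f i)) = α * δ (f j) + T := by
      have e1 : α * δ (f j) + T = ∑ i : Fin k,
          ((if i = j then α * δ (f j) else 0) +
            (if i.1 < j.1 then (((B t).2 i : ℤ) - ((B t').2 i : ℤ)) * δ (f i) else 0)) := by
        rw [Finset.sum_add_distrib, Finset.sum_ite_eq' Finset.univ j (fun _ => α * δ (f j))]
        simp [hT_def]
      rw [e1, ← Finset.sum_sub_distrib]
      apply Finset.sum_congr rfl
      intro i _
      rcases lt_trichotomy i.1 j.1 with h | h | h
      · have hij : i ≠ j := fun hh => by omega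
        rw [if_neg hij, if_pos h]
        ring
      · have hij : i = j := Fin.ext h
        subst hij
        rw [if_pos rfl, if_neg (lt_irrefl i.1)]
        simp only [hα_def]
        ring
      · have hij : i ≠ j := fun hh => by omega
        rw [if_neg hij, if_neg (by omega : ¬ i.1 < j.1), hagree i h]
        ring
    have h2 : (∑ i : Fin k, ((B t).2 i : ℤ) * δ (f i)) -
        (∑ i : Fin k, ((B t').2 i : ℤ) * δ (f i)) = ((B t').1 - (B t).1) * δ xR := by
      have := hww
      simp only [hw_def] at this
      linarith
    have h3 : ∑ i : Fin k,
        (if i.1 < j.1 then ((((B t').2 i : ℤ)) - ((B t).2 i : ℤ)) * δ (f i) else 0) = -T := by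
      rw [hT_def, ← Finset.sum_neg_distrib]
      apply Finset.sum_congr rfl
      intro i _
      split <;> ring
    have hmem : P j ≤ α := (hP j).2 ⟨hα, (B t').1 - (B t).1,
      fun i => ((B t').2 i : ℤ) - ((B t).2 i : ℤ), by rw [h3]; linarith⟩
    omega
  -- weights are injective
  have hw_inj : ∀ t t' : Fin s, t ≠ t' → w t ≠ w t' := by
    intro t t' hne hww
    have hBne : B t ≠ B t' := fun h => hne (hB h)
    by_cases h2 : (B t).2 = (B t').2
    · have h1ne : (B t).1 ≠ (B t').1 := fun h1 => hBne (Prod.ext_iff.mpr ⟨h1, h2⟩)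
      have hSig : ∑ i : Fin k, ((B t).2 i : ℤ) * δ (f i) =
          ∑ i : Fin k, ((B t').2 i : ℤ) * δ (f i) := by rw [h2]
      have hx' : (B t).1 * δ xR = (B t').1 * δ xR := by
        simp only [hw_def] at hww; linarith
      exact h1ne (mul_right_cancel₀ (ne_of_gt hx) hx')
    · obtain ⟨j₀, hj₀⟩ := Function.ne_iff.mp h2
      set D : Finset (Fin k) := Finset.univ.filter (fun i => (B t).2 i ≠ (B t').2 i) with hD_def
      have hD : D.Nonempty := ⟨j₀, by simp [hD_def, hj₀]⟩
      obtain ⟨j, hjD, hjmax⟩ := D.exists_max_image (fun i => i.1) hD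
      have hjne : (B t).2 j ≠ (B t').2 j := (Finset.mem_filter.mp hjD).2
      have hagree : ∀ i : Fin k, j.1 < i.1 → (B t).2 i = (B t').2 i := by
        intro i hi
        by_contra hne'
        have hiD : i ∈ D := by simp [hD_def, hne']
        have := hjmax i hiD
        omega
      rcases lt_or_gt_of_ne hjne with h | h
      · exact key t' t j h (fun i hi => (hagree i hi).symm) hww.symm
      · exact key t t' j h hagree hww
  -- apply the sum lemma
  have hSne : (Finset.univ : Finset (Fin s)).Nonempty := Finset.univ_nonempty_iff.mpr
    (Fin.pos_iff_nonempty.mp hs)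
  obtain ⟨hne0, ⟨t', _, ht'eq⟩, hub⟩ := delta_sum hδ m Finset.univ hSne
    (fun t _ => hm0 t)
    (fun t _ t'' _ hne => by rw [hmw t, hmw t'']; exact hw_inj t t'' hne)
  refine ⟨hne0, ⟨t', by rw [ht'eq, hmw t']⟩, ?_⟩
  rintro z ⟨t, rfl⟩
  rw [← hmw t]
  exact hub t (Finset.mem_univ t)
end
end

section
/- Lemma (semi-isomorphism): let j ≥ 1 and let ω₀, …, ω_j be positive integers; for 1 ≤ i ≤ j let p_i be the least positive integer α with α·ω_i ∈ ℤω₀ + ⋯ + ℤω_{i−1}. Suppose given nonzero constants c_i ∈ ℂ and nonnegative integers β_{i,0}, …, β_{i,i−1} with β_{i,i'} < p_{i'} for 1 ≤ i' < i and p_i·ω_i = β_{i,0}ω₀ + β_{i,1}ω₁ + ⋯ + β_{i,i−1}ω_{i−1} for every 1 ≤ i ≤ j. Set H_{i+1} := y_i^{p_i} − c_i·x^{β_{i,0}}·y₁^{β_{i,1}} ⋯ y_{i−1}^{β_{i,i−1}} ∈ ℂ[x, y₁, …, y_j]. Then there exist nonzero b₁, …, b_j ∈ ℂ such that the ℂ-algebra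 homomorphism Ψ : ℂ[x, y₁, …, y_j] → ℂ[t] with Ψ(x) = t^{ω₀} and Ψ(y_i) = b_i·t^{ω_i} has kernel equal to the ideal generated by H₂, …, H_{j+1} and range equal to the ℂ-subalgebra of ℂ[t] generated by t^{ω₀}, …, t^{ω_j}; in particular ℂ[x, y₁, …, y_j]/(H₂, …, H_{j+1}) is isomorphic as a ℂ-algebra to ℂ[t^{ω₀}, …, t^{ω_j}]. -/
/-!
Choose `b₀ = 1` and `bᵢ` recursively with `bᵢ ^ pᵢ = cᵢ · ∏_{m < i} b_m ^ β_{i,m}`; together with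
`pᵢ ωᵢ = Σ β_{i,m} ω_m` this makes `Ψ` kill every `H_{i+1}`. Conversely, rewriting
`yᵢ ^ pᵢ ↦ cᵢ x^{β_{i,0}} ⋯ y_{i-1}^{β_{i,i-1}}` terminates (it lowers a weight in which each `yᵢ`
outweighs the monomial replacing its `pᵢ`-th power), so every polynomial is congruent modulo
`(H₂, …, H_{j+1})` to one whose monomials have exponents `dᵢ < pᵢ` for `i ≥ 1`. Such monomials
have distinct `ω`-weights by minimality of the `pᵢ`, hence distinct images `bᵈ t^{Σ dᵢ ωᵢ}` under
`Ψ`, so a reduced polynomial in the kernel vanishes.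
-/

noncomputable section

open Finset

@[to_additive]
theorem Fin.prod_univ_ite_val_lt {M : Type*} [CommMonoid M] {n i : ℕ} (hi : i ≤ n)
    (f : ℕ → M) : ∏ m : Fin n, (if m.1 < i then f m else 1) = ∏ m ∈ range i, f m := by
  rw [Fin.prod_univ_eq_prod_range (fun m => if m < i then f m else 1), ← prod_filter]
  congr 1
  ext m
  simp only [mem_filter, mem_range]
  omega

theorem Algebra.adjoin_range_smul {ι K A : Type*} [Field K] [Semiring A] [Algebra K A]
    {b : ι → K} (hb : ∀ i, b i ≠ 0) (x : ι → A) :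
    adjoin K (Set.range fun i => b i • x i) = adjoin K (Set.range x) := by
  refine le_antisymm (adjoin_le ?_) (adjoin_le ?_) <;> rintro _ ⟨i, rfl⟩
  · exact Subalgebra.smul_mem _ (subset_adjoin (Set.mem_range_self i)) _
  · rw [← inv_smul_smul₀ (hb i) (x i)]
    exact Subalgebra.smul_mem _ (subset_adjoin (Set.mem_range_self i)) _

namespace MvPolynomial

variable {σ R : Type*}

theorem exists_sub_mem_support_subset [CommRing R] {I : Ideal (MvPolynomial σ R)} {S : Set σ}
    {p : σ → ℕ} {g : σ → σ →₀ ℕ} {a : σ → R} (w : σ → ℕ)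
    (hw : ∀ i ∈ S, Finsupp.weight w (g i) < p i * w i)
    (hI : ∀ i ∈ S, X i ^ p i - monomial (g i) (a i) ∈ I) (f : MvPolynomial σ R) :
    ∃ r : MvPolynomial σ R, (r.support : Set (σ →₀ ℕ)) ⊆ {d | ∀ i ∈ S, d i < p i} ∧
      f - r ∈ I := by
  classical
  induction f using induction_on' with
  | monomial u c =>
    induction hu : Finsupp.weight w u using Nat.strong_induction_on generalizing u c with
    | _ n ih =>
    by_cases hred : ∀ i ∈ S, u i < p i
    · refine ⟨monomial u c, fun d hd => ?_, by simp⟩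
      rwa [Finset.mem_singleton.1 (support_monomial_subset hd)]
    push Not at hred
    obtain ⟨i, hiS, hpi⟩ := hred
    obtain ⟨v, rfl⟩ : ∃ v, u = v + Finsupp.single i (p i) :=
      ⟨u - Finsupp.single i (p i), (tsub_add_cancel_of_le (Finsupp.single_le_iff.2 hpi)).symm⟩
    obtain ⟨r, hr, hmem⟩ := ih (Finsupp.weight w (v + g i))
      (by have := hw i hiS; simp only [map_add, Finsupp.weight_single, smul_eq_mul] at hu ⊢; omega)
      (v + g i) (c * a i) rfl
    refine ⟨r, hr, ?_⟩
    have hstep : monomial (v + Finsupp.single i (p i)) c - monomial (v + g i) (c * a i) =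
        monomial v c * (X i ^ p i - monomial (g i) (a i)) := by
      rw [mul_sub, X_pow_eq_monomial, monomial_mul, monomial_mul, mul_one]
    rw [← sub_add_sub_cancel _ (monomial (v + g i) (c * a i)), hstep]
    exact I.add_mem (I.mul_mem_left _ (hI i hiS)) hmem
  | add f₁ f₂ h₁ h₂ =>
    obtain ⟨r₁, hr₁, hmem₁⟩ := h₁
    obtain ⟨r₂, hr₂, hmem₂⟩ := h₂
    refine ⟨r₁ + r₂, fun d hd => ?_, by rw [add_sub_add_comm]; exact I.add_mem hmem₁ hmem₂⟩
    rcases Finset.mem_union.1 (support_add hd) with hd | hd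
    exacts [hr₁ hd, hr₂ hd]

theorem aeval_C_mul_X_pow_monomial [CommSemiring R] (b : σ → R) (ω : σ → ℕ) (d : σ →₀ ℕ)
    (a : R) :
    aeval (fun i => Polynomial.C (b i) * Polynomial.X ^ ω i) (monomial d a) =
      Polynomial.C (a * d.prod fun i k => b i ^ k) * Polynomial.X ^ Finsupp.weight ω d := by
  simp only [aeval_monomial, mul_pow, Finsupp.prod_mul, Finsupp.weight_apply, smul_eq_mul,
    ← pow_mul, Polynomial.C_mul, ← Polynomial.C_pow, map_finsuppProd, Polynomial.algebraMap_eq]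
  rw [Finsupp.sum, ← Finset.prod_pow_eq_pow_sum]
  simp only [Finsupp.prod, mul_assoc, mul_comm (ω _)]

theorem eq_zero_of_aeval_C_mul_X_pow_eq_zero [CommRing R] [IsDomain R] {b : σ → R}
    (hb : ∀ i, b i ≠ 0) {ω : σ → ℕ} {r : MvPolynomial σ R}
    (hinj : Set.InjOn (Finsupp.weight ω) (r.support : Set (σ →₀ ℕ)))
    (hr : aeval (fun i => Polynomial.C (b i) * Polynomial.X ^ ω i) r = 0) : r = 0 := by
  classical
  by_contra hne
  obtain ⟨d, hd⟩ := support_nonempty.2 hne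
  have hcoeff := congrArg (Polynomial.coeff · (Finsupp.weight ω d)) hr
  rw [r.as_sum] at hcoeff
  simp only [map_sum, aeval_C_mul_X_pow_monomial, Polynomial.finsetSum_coeff,
    Polynomial.coeff_C_mul_X_pow, Polynomial.coeff_zero] at hcoeff
  rw [Finset.sum_eq_single d (fun d' hd' hne' => if_neg fun h => hne' (hinj hd hd' h).symm)
    (fun h => absurd hd h), if_pos rfl] at hcoeff
  exact mul_ne_zero (mem_support_iff.1 hd)
    (Finsupp.prod_ne_zero_iff.2 fun i _ => pow_ne_zero _ (hb i)) hcoeff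

theorem ker_aeval_C_mul_X_pow_eq_span [CommRing R] [IsDomain R] {b : σ → R}
    (hb : ∀ i, b i ≠ 0) {ω : σ → ℕ} {S : Set σ} {p : σ → ℕ} {g : σ → σ →₀ ℕ} {a : σ → R}
    {G : σ → MvPolynomial σ R} (hG : ∀ i ∈ S, G i = X i ^ p i - monomial (g i) (a i))
    (w : σ → ℕ) (hw : ∀ i ∈ S, Finsupp.weight w (g i) < p i * w i)
    (hinj : Set.InjOn (Finsupp.weight ω) {d | ∀ i ∈ S, d i < p i})
    (hgen : ∀ i ∈ S, aeval (fun i => Polynomial.C (b i) * Polynomial.X ^ ω i)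
      (X i ^ p i - monomial (g i) (a i)) = 0) :
    RingHom.ker (aeval fun i => Polynomial.C (b i) * Polynomial.X ^ ω i).toRingHom =
      Ideal.span (G '' S) := by
  have hle : Ideal.span (G '' S) ≤
      RingHom.ker (aeval fun i => Polynomial.C (b i) * Polynomial.X ^ ω i).toRingHom :=
    Ideal.span_le.2 <| by
      rintro _ ⟨i, hi, rfl⟩
      rw [SetLike.mem_coe, RingHom.mem_ker, hG i hi]
      exact hgen i hi
  refine le_antisymm (fun f hf => ?_) hle
  obtain ⟨r, hr, hfr⟩ := exists_sub_mem_support_subset w hw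
    (fun i hi => hG i hi ▸ Ideal.subset_span (Set.mem_image_of_mem G hi)) f
  have hrker := hle hfr
  rw [RingHom.mem_ker, map_sub, RingHom.mem_ker.1 hf, zero_sub, neg_eq_zero] at hrker
  rwa [eq_zero_of_aeval_C_mul_X_pow_eq_zero hb (hinj.mono hr) hrker, sub_zero] at hfr

theorem range_aeval_C_mul_X_pow {K : Type*} [Field K] {j : ℕ} {b : ℕ → K}
    (hb : ∀ i ≤ j, b i ≠ 0) (ω : ℕ → ℕ) :
    (aeval fun i : Fin (j + 1) => Polynomial.C (b i) * Polynomial.X ^ ω i).range =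
      Algebra.adjoin K ((fun i => (Polynomial.X : Polynomial K) ^ ω i) '' {i | i ≤ j}) := by
  simp_rw [← Algebra.adjoin_range_eq_range_aeval, ← Polynomial.smul_eq_C_mul,
    Algebra.adjoin_range_smul fun i : Fin (j + 1) => hb i (Nat.lt_succ_iff.1 i.2)]
  congr 1
  ext p
  simp [Fin.exists_iff]

end MvPolynomial

theorem eq_zero_of_sum_range_mul_eq_zero {ω P : ℕ → ℕ} (hω₀ : 0 < ω 0) {k : ℕ}
    (hP : ∀ i, 1 ≤ i → i ≤ k → P i ∈ lowerBounds {α : ℕ | 0 < α ∧ ∃ γ : ℕ → ℤ,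
      (α : ℤ) * (ω i : ℤ) = ∑ i' ∈ range i, γ i' * (ω i' : ℤ)})
    {e : ℕ → ℤ} (he : ∀ i, 1 ≤ i → i ≤ k → |e i| < P i)
    (hsum : ∑ i ∈ range (k + 1), e i * ω i = 0) : ∀ i ≤ k, e i = 0 := by
  induction k with
  | zero =>
    intro i hi
    rw [Nat.le_zero.1 hi]
    simpa [hω₀.ne'] using hsum
  | succ k ih =>
    rw [sum_range_succ] at hsum
    have htop : e (k + 1) = 0 := by
      by_contra hne
      -- otherwise `|e (k + 1)| < P (k + 1)` would be a smaller admissible multiplier of `ω (k + 1)`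
      have hmin := hP (k + 1) (by omega) le_rfl ⟨Int.natAbs_pos.2 hne,
        fun i => -(e (k + 1)).sign * e i, ?_⟩
      · have := he (k + 1) (by omega) le_rfl
        rw [Int.abs_eq_natAbs] at this
        omega
      · rw [← Int.sign_mul_self_eq_natAbs, mul_assoc, eq_neg_of_add_eq_zero_right hsum,
          mul_neg, Finset.mul_sum, ← Finset.sum_neg_distrib]
        simp only [neg_mul, mul_assoc]
    intro i hi
    rcases Nat.lt_or_eq_of_le hi with hi | rfl
    · exact ih (fun i h₁ h₂ => hP i h₁ (by omega)) (fun i h₁ h₂ => he i h₁ (by omega))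
        (by simpa [htop] using hsum) i (by omega)
    · exact htop

open Fin.NatCast in
theorem weight_injOn_of_lt {j : ℕ} {ω P : ℕ → ℕ} (hω₀ : 0 < ω 0)
    (hP : ∀ i, 1 ≤ i → i ≤ j → P i ∈ lowerBounds {α : ℕ | 0 < α ∧ ∃ γ : ℕ → ℤ,
      (α : ℤ) * (ω i : ℤ) = ∑ i' ∈ range i, γ i' * (ω i' : ℤ)}) :
    Set.InjOn (Finsupp.weight fun i : Fin (j + 1) => ω i)
      {d | ∀ i ∈ {i : Fin (j + 1) | 1 ≤ i.1}, d i < P i} := by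
  intro d hd d' hd' h
  have key := eq_zero_of_sum_range_mul_eq_zero hω₀ hP
    (e := fun n => (d (n : Fin (j + 1)) : ℤ) - d' (n : Fin (j + 1))) (fun i h₁ h₂ => ?_) ?_
  · ext i
    simpa [sub_eq_zero] using key i (Nat.lt_succ_iff.1 i.2)
  · have hi : ((i : Fin (j + 1)) : ℕ) = i := Fin.val_cast_of_lt (by omega)
    have := hd (i : Fin (j + 1)) (by simpa [hi])
    have := hd' (i : Fin (j + 1)) (by simpa [hi])
    rw [hi] at *
    rw [abs_sub_lt_iff]
    omega
  · rw [← Fin.sum_univ_eq_sum_range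
      (fun n => ((d (n : Fin (j + 1)) : ℤ) - d' (n : Fin (j + 1))) * ω n)]
    simp only [Fin.cast_val_eq_self, sub_mul, Finset.sum_sub_distrib, sub_eq_zero]
    simp only [Finsupp.weight_eq_sum, smul_eq_mul] at h
    exact_mod_cast h

def dominatingWeight (β : ℕ → ℕ → ℕ) : ℕ → ℕ
  | i => 1 + ∑ m : Fin i, β i m * dominatingWeight β m
decreasing_by exact m.2

theorem sum_range_mul_dominatingWeight_lt (β : ℕ → ℕ → ℕ) (i : ℕ) :
    ∑ m ∈ range i, β i m * dominatingWeight β m < dominatingWeight β i := by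
  rw [dominatingWeight, Fin.sum_univ_eq_sum_range (fun m => β i m * dominatingWeight β m)]
  omega

def rootCoeff (P : ℕ → ℕ) (c : ℕ → ℂ) (β : ℕ → ℕ → ℕ) : ℕ → ℂ
  | 0 => 1
  | i + 1 => (c (i + 1) * ∏ m : Fin (i + 1), rootCoeff P c β m ^ β (i + 1) m) ^ (P (i + 1) : ℂ)⁻¹
decreasing_by exact m.2

theorem rootCoeff_zero (P : ℕ → ℕ) (c : ℕ → ℂ) (β : ℕ → ℕ → ℕ) : rootCoeff P c β 0 = 1 := by
  rw [rootCoeff]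

theorem rootCoeff_pow {P : ℕ → ℕ} (c : ℕ → ℂ) (β : ℕ → ℕ → ℕ) {i : ℕ} (hi : 1 ≤ i)
    (hP : P i ≠ 0) :
    rootCoeff P c β i ^ P i = c i * ∏ m ∈ range i, rootCoeff P c β m ^ β i m := by
  obtain ⟨i, rfl⟩ := Nat.exists_eq_add_of_le' hi
  rw [rootCoeff, Complex.cpow_nat_inv_pow _ hP,
    Fin.prod_univ_eq_prod_range (fun m => rootCoeff P c β m ^ β (i + 1) m)]

theorem rootCoeff_ne_zero (P : ℕ → ℕ) {c : ℕ → ℂ} (β : ℕ → ℕ → ℕ) {j : ℕ}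
    (hc : ∀ i, 1 ≤ i → i ≤ j → c i ≠ 0) : ∀ i ≤ j, rootCoeff P c β i ≠ 0 := by
  intro i
  induction i using Nat.strong_induction_on with
  | _ i ih =>
  intro hi
  rcases i with _ | i
  · simp [rootCoeff_zero]
  rw [rootCoeff, Ne, Complex.cpow_eq_zero_iff, not_and_or]
  refine Or.inl (mul_ne_zero (hc _ (by omega) hi) (prod_ne_zero_iff.2 fun m _ => ?_))
  exact pow_ne_zero _ (ih m m.2 (by omega))

section LowerExponent

variable {j : ℕ}

def lowerExponent (β : ℕ → ℕ → ℕ) (i : Fin (j + 1)) : Fin (j + 1) →₀ ℕ :=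
  Finsupp.equivFunOnFinite.symm fun m => if m.1 < i.1 then β i m else 0

theorem weight_lowerExponent (β : ℕ → ℕ → ℕ) (w : ℕ → ℕ) (i : Fin (j + 1)) :
    Finsupp.weight (fun m : Fin (j + 1) => w m) (lowerExponent β i) =
      ∑ m ∈ range i, β i m * w m := by
  simp only [Finsupp.weight_eq_sum, lowerExponent, Finsupp.coe_equivFunOnFinite_symm,
    smul_eq_mul, ite_mul, zero_mul]
  exact Fin.sum_univ_ite_val_lt i.2.le fun m => β i m * w m

theorem prod_lowerExponent {M : Type*} [CommMonoid M] (β : ℕ → ℕ → ℕ) (b : ℕ → M)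
    (i : Fin (j + 1)) :
    ((lowerExponent β i).prod fun m k => b m ^ k) = ∏ m ∈ range i, b m ^ β i m := by
  rw [Finsupp.prod_fintype _ _ fun _ => pow_zero _]
  simp only [lowerExponent, Finsupp.coe_equivFunOnFinite_symm, pow_ite, pow_zero]
  exact Fin.prod_univ_ite_val_lt i.2.le fun m => b m ^ β i m

theorem MvPolynomial.C_mul_X_pow_mul_prod_eq_monomial {R : Type*} [CommSemiring R]
    (β : ℕ → ℕ → ℕ) (a : R) {i : Fin (j + 1)} (hi : 1 ≤ i.1) :
    C a * X (0 : Fin (j + 1)) ^ β i 0 *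
        ∏ i' : Fin (j + 1), (if 1 ≤ i'.1 ∧ i'.1 < i.1 then X i' ^ β i i' else 1) =
      monomial (lowerExponent β i) a := by
  rw [monomial_eq, Finsupp.prod_fintype _ _ fun _ => pow_zero _, mul_assoc, Fin.prod_univ_succ,
    Fin.prod_univ_succ]
  simp only [lowerExponent, Finsupp.coe_equivFunOnFinite_symm, Fin.val_zero, Fin.val_succ,
    pow_ite, pow_zero, Nat.le_add_left, true_and]
  simp [show 0 < i.1 by omega]

theorem weight_lowerExponent_lt_mul_dominatingWeight (β : ℕ → ℕ → ℕ) {P : ℕ → ℕ}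
    {i : Fin (j + 1)} (hP : P i ≠ 0) :
    Finsupp.weight (fun m : Fin (j + 1) => dominatingWeight β m) (lowerExponent β i) <
      P i * dominatingWeight β i := by
  rw [weight_lowerExponent]
  exact (sum_range_mul_dominatingWeight_lt β i).trans_le (Nat.le_mul_of_pos_left _ (by omega))

theorem MvPolynomial.aeval_X_pow_sub_monomial_lowerExponent {P ω : ℕ → ℕ} (c : ℕ → ℂ)
    (β : ℕ → ℕ → ℕ) {i : Fin (j + 1)} (hi : 1 ≤ i.1) (hP : P i ≠ 0)
    (hβ : P i * ω i = ∑ m ∈ range i, β i m * ω m) :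
    aeval (fun m : Fin (j + 1) => Polynomial.C (rootCoeff P c β m) * Polynomial.X ^ ω m)
      (X i ^ P i - monomial (lowerExponent β i) (c i)) = 0 := by
  rw [map_sub, X_pow_eq_monomial, aeval_C_mul_X_pow_monomial, aeval_C_mul_X_pow_monomial,
    Finsupp.prod_single_index (h := fun (m : Fin (j + 1)) k => rootCoeff P c β m ^ k)
      (pow_zero _),
    Finsupp.weight_single, weight_lowerExponent, prod_lowerExponent, one_mul, smul_eq_mul, hβ,
    ← rootCoeff_pow c β hi hP, sub_self]

end LowerExponent

theorem semigroup_ring_presentation_general (j : ℕ)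
    (ω : ℕ → ℕ) (hω : ∀ i, i ≤ j → 0 < ω i)
    (P : ℕ → ℕ)
    (hP : ∀ i, 1 ≤ i → i ≤ j →
      IsLeast {α : ℕ | 0 < α ∧ ∃ γ : ℕ → ℤ,
        (α : ℤ) * (ω i : ℤ) = ∑ i' ∈ Finset.range i, γ i' * (ω i' : ℤ)} (P i))
    (c : ℕ → ℂ) (hc : ∀ i, 1 ≤ i → i ≤ j → c i ≠ 0)
    (β : ℕ → ℕ → ℕ)
    (hβeq : ∀ i, 1 ≤ i → i ≤ j →
      (P i : ℤ) * (ω i : ℤ) = ∑ i' ∈ Finset.range i, (β i i' : ℤ) * (ω i' : ℤ)) :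
    ∃ (b : ℕ → ℂ) (Ψ : MvPolynomial (Fin (j + 1)) ℂ →ₐ[ℂ] Polynomial ℂ),
      (∀ i, 1 ≤ i → i ≤ j → b i ≠ 0) ∧
      Ψ (MvPolynomial.X 0) = Polynomial.X ^ ω 0 ∧
      (∀ i : Fin (j + 1), 1 ≤ i.1 →
        Ψ (MvPolynomial.X i) = Polynomial.C (b i.1) * Polynomial.X ^ ω i.1) ∧
      RingHom.ker Ψ.toRingHom =
        Ideal.span ((fun i : Fin (j + 1) =>
          MvPolynomial.X i ^ P i.1 -
            MvPolynomial.C (c i.1) * MvPolynomial.X (0 : Fin (j + 1)) ^ β i.1 0 *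
              ∏ i' : Fin (j + 1),
                if 1 ≤ i'.1 ∧ i'.1 < i.1 then MvPolynomial.X i' ^ β i.1 i'.1 else 1)
          '' {i : Fin (j + 1) | 1 ≤ i.1}) ∧
      Ψ.range = Algebra.adjoin ℂ
        ((fun i : ℕ => (Polynomial.X : Polynomial ℂ) ^ ω i) '' {i : ℕ | i ≤ j}) := by
  have hb := rootCoeff_ne_zero P β hc
  have hPne (i : Fin (j + 1)) (hi : 1 ≤ i.1) : P i ≠ 0 := (hP i hi (by omega)).1.1.ne'
  refine ⟨rootCoeff P c β,
    MvPolynomial.aeval fun i => Polynomial.C (rootCoeff P c β i) * Polynomial.X ^ ω i,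
    fun i _ hi => hb i hi, by simp [rootCoeff_zero], fun i _ => MvPolynomial.aeval_X _ _,
    MvPolynomial.ker_aeval_C_mul_X_pow_eq_span (fun i : Fin (j + 1) => hb i (by omega))
      (fun i hi => by rw [MvPolynomial.C_mul_X_pow_mul_prod_eq_monomial β _ hi])
      _ (fun i hi => weight_lowerExponent_lt_mul_dominatingWeight β (hPne i hi))
      (weight_injOn_of_lt (hω 0 j.zero_le) fun i h₁ h₂ => (hP i h₁ h₂).2)
      fun i hi => MvPolynomial.aeval_X_pow_sub_monomial_lowerExponent c β hi (hPne i hi)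
        (by exact_mod_cast hβeq i hi (by omega)),
    MvPolynomial.range_aeval_C_mul_X_pow hb ω⟩

/-- Lemma `semi-isomorphism`: let `j ≥ 1`, `ω₀, …, ω_j` positive integers, and for
`1 ≤ i ≤ j` let `P i` be the least positive integer `α` with
`α·ω_i ∈ ℤω₀ + ⋯ + ℤω_{i-1}`. Given nonzero `c_i ∈ ℂ` and nonnegative integers `β i i'`
with `β i i' < P i'` for `1 ≤ i' < i` and `P i · ω i = Σ_{i' < i} β i i' · ω i'`, set
`H_{i+1} := y_i^{P i} − c_i·x^{β i 0}·y₁^{β i 1} ⋯ y_{i-1}^{β i (i-1)}` in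
`ℂ[x, y₁, …, y_j]` (modeled as `MvPolynomial (Fin (j+1)) ℂ` with variable `0` playing
the role of `x` and variable `i ≥ 1` the role of `y_i`). Then there are nonzero constants
`b_i ∈ ℂ` such that the `ℂ`-algebra map `Ψ : ℂ[x, y₁, …, y_j] → ℂ[t]` with `Ψ(x) = t^{ω₀}`
and `Ψ(y_i) = b_i·t^{ω_i}` has kernel the ideal generated by `H₂, …, H_{j+1}` and range the
`ℂ`-subalgebra of `ℂ[t]` generated by `t^{ω₀}, …, t^{ω_j}`. -/
theorem semigroup_ring_presentation (j : ℕ) (hj : 1 ≤ j)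
    (ω : ℕ → ℕ) (hω : ∀ i, i ≤ j → 0 < ω i)
    (P : ℕ → ℕ)
    (hP : ∀ i, 1 ≤ i → i ≤ j →
      IsLeast {α : ℕ | 0 < α ∧ ∃ γ : ℕ → ℤ,
        (α : ℤ) * (ω i : ℤ) = ∑ i' ∈ Finset.range i, γ i' * (ω i' : ℤ)} (P i))
    (c : ℕ → ℂ) (hc : ∀ i, 1 ≤ i → i ≤ j → c i ≠ 0)
    (β : ℕ → ℕ → ℕ)
    (hβlt : ∀ i i', 1 ≤ i' → i' < i → i ≤ j → β i i' < P i')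
    (hβeq : ∀ i, 1 ≤ i → i ≤ j →
      (P i : ℤ) * (ω i : ℤ) = ∑ i' ∈ Finset.range i, (β i i' : ℤ) * (ω i' : ℤ)) :
    ∃ (b : ℕ → ℂ) (Ψ : MvPolynomial (Fin (j + 1)) ℂ →ₐ[ℂ] Polynomial ℂ),
      (∀ i, 1 ≤ i → i ≤ j → b i ≠ 0) ∧
      Ψ (MvPolynomial.X 0) = Polynomial.X ^ ω 0 ∧
      (∀ i : Fin (j + 1), 1 ≤ i.1 →
        Ψ (MvPolynomial.X i) = Polynomial.C (b i.1) * Polynomial.X ^ ω i.1) ∧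
      RingHom.ker Ψ.toRingHom =
        Ideal.span ((fun i : Fin (j + 1) =>
          MvPolynomial.X i ^ P i.1 -
            MvPolynomial.C (c i.1) * MvPolynomial.X (0 : Fin (j + 1)) ^ β i.1 0 *
              ∏ i' : Fin (j + 1),
                if 1 ≤ i'.1 ∧ i'.1 < i.1 then MvPolynomial.X i' ^ β i.1 i'.1 else 1)
          '' {i : Fin (j + 1) | 1 ≤ i.1}) ∧
      Ψ.range = Algebra.adjoin ℂ
        ((fun i : ℕ => (Polynomial.X : Polynomial ℂ) ^ ω i) '' {i : ℕ | i ≤ j}) :=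
  semigroup_ring_presentation_general j ω hω P hP c hc β hβeq
end
end
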